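/- arXiv:1312.5195 — 8 statements merged into one kernel-verified Lean document; each statement's English description precedes it below -/
import Mathlib

section
/- Let A be a C*-algebra, τ ≥ 0, and a, b ∈ A₊ with 0 ≤ b ≤ a + τ·1 in the multiplier algebra (equivalently, in the unitization) of A. Then for every ε > τ there exists a contraction f ∈ A such that (b − ε)₊ = f* a f. -/
/-!
Let `e = (b - ε)₊`, `c = e^{1/2}`, `δ = ε - τ` and `d = c a c`. Conjugating `b - τ ≤ a` by `c`
gives `δ e + e² ≤ d`. Formally `f = c d^{-1/2} c` satisfies `f a f = c c = e`; it is realised as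
the norm limit, as `s → 0⁺`, of `F s = c w_s c` with `w_s = (max d s)^{-1/2}`.
The bound `δ e ≤ d` yields `‖c ξ(d) c‖ ≤ δ⁻¹ sup ξ(u) u`, whence `‖F s - F t‖² ≤ δ⁻² max s t`
and `‖e - F s a F s‖ ≤ δ⁻¹ s`. The bound `e² ≤ d` gives `w_s e² w_s ≤ w_s d w_s ≤ 1`, and
`‖F s‖` is the spectral radius of `w_s^{1/2} e w_s^{1/2}`, hence of `e w_s`, so `‖F s‖ ≤ 1`.
-/

open Filter Topology
open scoped ENNReal

noncomputable def invSqrtMax (s u : ℝ) : ℝ := (√(max u s))⁻¹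

section invSqrtMax

variable {s : ℝ}

lemma continuous_invSqrtMax (hs : 0 < s) : Continuous (invSqrtMax s) :=
  (by fun_prop : Continuous fun u => √(max u s)).inv₀ fun u =>
    (Real.sqrt_pos.2 (lt_max_of_lt_right hs)).ne'

lemma invSqrtMax_nonneg (u : ℝ) : 0 ≤ invSqrtMax s u :=
  inv_nonneg.2 (Real.sqrt_nonneg _)

lemma invSqrtMax_mul_self (hs : 0 < s) (u : ℝ) :
    invSqrtMax s u * invSqrtMax s u = (max u s)⁻¹ := by
  rw [invSqrtMax, ← mul_inv, Real.mul_self_sqrt (hs.le.trans (le_max_right u s))]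

lemma invSqrtMax_mul_mul_self (hs : 0 < s) (u : ℝ) :
    invSqrtMax s u * u * invSqrtMax s u = u / max u s := by
  rw [mul_right_comm, invSqrtMax_mul_self hs, inv_mul_eq_div]

lemma invSqrtMax_mul_mul_self_le_one (hs : 0 < s) (u : ℝ) :
    invSqrtMax s u * u * invSqrtMax s u ≤ 1 := by
  rw [invSqrtMax_mul_mul_self hs, div_le_one (lt_max_of_lt_right hs)]
  exact le_max_left u s

lemma one_sub_invSqrtMax_mul_mul_self_mul_le (hs : 0 < s) {u : ℝ} (hu : 0 ≤ u) :
    (1 - invSqrtMax s u * u * invSqrtMax s u) * u ≤ s := by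
  rw [invSqrtMax_mul_mul_self hs]
  rcases le_total u s with hus | hsu
  · rw [max_eq_right hus]
    nlinarith [div_nonneg hu hs.le]
  · rw [max_eq_left hsu, div_self (hs.trans_le hsu).ne']
    simpa using hs.le

lemma invSqrtMax_mul_le_sqrt (hs : 0 < s) {u : ℝ} (hu : 0 ≤ u) :
    invSqrtMax s u * u ≤ √u := by
  refine Real.le_sqrt_of_sq_le ?_
  calc (invSqrtMax s u * u) ^ 2 = u * (u / max u s) := by
        rw [← invSqrtMax_mul_mul_self hs]; ring
    _ ≤ u * 1 := by
        gcongr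
        exact div_le_one_of_le₀ (le_max_left u s) (hs.le.trans (le_max_right u s))
    _ = u := mul_one u

lemma sq_sub_invSqrtMax_mul_le {t : ℝ} (hs : 0 < s) (ht : 0 < t) {u : ℝ} (hu : 0 ≤ u) :
    ((invSqrtMax s u - invSqrtMax t u) * u) ^ 2 ≤ max s t := by
  rcases le_or_gt u (max s t) with hu' | hu'
  · have key : |invSqrtMax s u * u - invSqrtMax t u * u| ≤ √u :=
      abs_sub_le_of_nonneg_of_le (mul_nonneg (invSqrtMax_nonneg u) hu)
        (invSqrtMax_mul_le_sqrt hs hu) (mul_nonneg (invSqrtMax_nonneg u) hu)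
        (invSqrtMax_mul_le_sqrt ht hu)
    calc ((invSqrtMax s u - invSqrtMax t u) * u) ^ 2 ≤ √u ^ 2 := by
          rw [sub_mul]; exact sq_le_sq' (abs_le.1 key).1 (abs_le.1 key).2
      _ = u := Real.sq_sqrt hu
      _ ≤ max s t := hu'
  · have hsu : max u s = max u t := by
      rw [max_eq_left (le_max_left s t |>.trans hu'.le),
        max_eq_left (le_max_right s t |>.trans hu'.le)]
    simp [invSqrtMax, hsu, hs.le]

end invSqrtMax

lemma exists_tendsto_nhdsGT_zero_of_sq_norm_sub_le {E : Type*} [NormedAddCommGroup E]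
    [CompleteSpace E] {F : ℝ → E} {C : ℝ}
    (h : ∀ s t, 0 < s → 0 < t → ‖F s - F t‖ ^ 2 ≤ C * max s t) :
    ∃ f, Tendsto F (𝓝[>] 0) (𝓝 f) := by
  refine cauchy_map_iff_exists_tendsto.1 (cauchy_map_iff.2 ⟨inferInstance, ?_⟩)
  rw [tendsto_uniformity_iff_dist_tendsto_zero]
  have hbound : Tendsto (fun p : ℝ × ℝ => √(C * max p.1 p.2)) (𝓝[>] 0 ×ˢ 𝓝[>] 0) (𝓝 0) := by
    have := ((by fun_prop : Continuous fun p : ℝ × ℝ => √(C * max p.1 p.2)).tendsto (0, 0))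
    simpa using this.mono_left (by
      rw [nhds_prod_eq]; exact prod_mono nhdsWithin_le_nhds nhdsWithin_le_nhds)
  refine squeeze_zero' (Eventually.of_forall fun _ => dist_nonneg) ?_ hbound
  filter_upwards [prod_mem_prod self_mem_nhdsWithin self_mem_nhdsWithin] with p hp
  rw [dist_eq_norm]
  exact Real.le_sqrt_of_sq_le (h _ _ hp.1 hp.2)

theorem spectralRadius_mul_comm {𝕜 B : Type*} [NormedField 𝕜] [Ring B] [Algebra 𝕜 B] (x y : B) :
    spectralRadius 𝕜 (x * y) = spectralRadius 𝕜 (y * x) := by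
  suffices h : ∀ z : B, spectralRadius 𝕜 z = ⨆ k ∈ spectrum 𝕜 z \ {0}, (‖k‖₊ : ℝ≥0∞) by
    rw [h, h, spectrum.nonzero_mul_comm]
  refine fun z => le_antisymm (iSup₂_le fun k hk => ?_) (biSup_mono fun _ hk => hk.1)
  rcases eq_or_ne k 0 with rfl | hk0
  · simp
  · exact le_iSup₂ (f := fun k (_ : k ∈ spectrum 𝕜 z \ {0}) => (‖k‖₊ : ℝ≥0∞)) k ⟨hk, hk0⟩

section CStarAlgebra

variable {A : Type*} [CStarAlgebra A]

lemma norm_mul_mul_self_mul_comm {c z : A} (hc : IsSelfAdjoint c) (hz : IsSelfAdjoint z) :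
    ‖c * (z * z) * c‖ = ‖z * (c * c) * z‖ := by
  have h₁ : c * (z * z) * c = star (z * c) * (z * c) := by
    simp only [star_mul, hc.star_eq, hz.star_eq]; noncomm_ring
  have h₂ : z * (c * c) * z = (z * c) * star (z * c) := by
    simp only [star_mul, hc.star_eq, hz.star_eq]; noncomm_ring
  rw [h₁, h₂, CStarRing.norm_star_mul_self, CStarRing.norm_self_mul_star]

lemma norm_mul_mul_le_norm_mul_mul_self {x z : A} (hx : IsSelfAdjoint x) (hz : IsSelfAdjoint z) :
    ‖z * x * z‖ ≤ ‖x * (z * z)‖ := by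
  nontriviality A
  have hzxz : IsSelfAdjoint (z * x * z) := by
    simpa [hz.star_eq] using hx.conjugate z
  have : (‖z * x * z‖₊ : ℝ≥0∞) ≤ ‖x * (z * z)‖₊ := by
    rw [← hzxz.spectralRadius_eq_nnnorm, mul_assoc, spectralRadius_mul_comm, mul_assoc]
    exact spectrum.spectralRadius_le_nnnorm _
  exact_mod_cast this

lemma cfc_mul_mul_cfc {f : ℝ → ℝ} {d : A} (hd : IsSelfAdjoint d) (hf : Continuous f) :
    cfc f d * d * cfc f d = cfc (fun u => f u * u * f u) d := by
  rw [cfc_mul (fun u => f u * u) f d, cfc_mul f (fun u => u) d, cfc_id' ℝ d]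

noncomputable def sqrtPosPartSub (ε : ℝ) (b : A) : A := cfc (fun t => √(max (t - ε) 0)) b

lemma sqrtPosPartSub_mul_self (ε : ℝ) (b : A) :
    sqrtPosPartSub ε b * sqrtPosPartSub ε b = cfc (fun t => max (t - ε) 0) b := by
  rw [sqrtPosPartSub, ← cfc_mul _ _ b]
  exact cfc_congr fun t _ => Real.mul_self_sqrt (le_max_right _ _)

lemma sqrtPosPartSub_mul_sub_algebraMap_mul {b : A} (hb : IsSelfAdjoint b) (τ ε : ℝ) :
    sqrtPosPartSub ε b * (b - algebraMap ℝ A τ) * sqrtPosPartSub ε b =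
      (ε - τ) • (sqrtPosPartSub ε b * sqrtPosPartSub ε b) +
        sqrtPosPartSub ε b * sqrtPosPartSub ε b * (sqrtPosPartSub ε b * sqrtPosPartSub ε b) := by
  have hsub : b - algebraMap ℝ A τ = cfc (fun t => t - τ) b := by
    rw [cfc_sub _ _ b, cfc_id' ℝ b, cfc_const τ b]
  rw [sqrtPosPartSub_mul_self, hsub, sqrtPosPartSub, ← cfc_mul _ _ b, ← cfc_mul _ _ b,
    ← cfc_mul _ _ b, ← cfc_smul _ _ b, ← cfc_add _ _ _]
  refine cfc_congr fun t _ => ?_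
  rw [mul_right_comm, Real.mul_self_sqrt (le_max_right _ _)]
  rcases le_total t ε with h | h
  · simp [max_eq_right (sub_nonpos.2 h)]
  · rw [max_eq_left (sub_nonneg.2 h), smul_eq_mul]
    ring

lemma isSelfAdjoint_sqrtPosPartSub (ε : ℝ) (b : A) : IsSelfAdjoint (sqrtPosPartSub ε b) :=
  cfc_predicate _ b

variable [PartialOrder A] [StarOrderedRing A]

lemma norm_mul_cfc_mul_le {c d : A} (hc : IsSelfAdjoint c) {δ : ℝ} (hδ : 0 < δ)
    (hcd : δ • (c * c) ≤ d) {ξ : ℝ → ℝ} (hξ : Continuous ξ) (hξ₀ : ∀ u ∈ spectrum ℝ d, 0 ≤ ξ u)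
    {M : ℝ} (hM₀ : 0 ≤ M) (hM : ∀ u ∈ spectrum ℝ d, ξ u * u ≤ M) :
    ‖c * cfc ξ d * c‖ ≤ δ⁻¹ * M := by
  have hd : 0 ≤ d := (smul_nonneg hδ.le hc.mul_self_nonneg).trans hcd
  set r := cfc (fun u => √(ξ u)) d
  have hr : IsSelfAdjoint r := cfc_predicate _ d
  have hrr : r * r = cfc ξ d := by
    rw [← cfc_mul _ _ d]
    exact cfc_congr fun u hu => Real.mul_self_sqrt (hξ₀ u hu)
  have hconj : δ • (r * (c * c) * r) ≤ algebraMap ℝ A M :=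
    calc δ • (r * (c * c) * r) = r * (δ • (c * c)) * r := by
          rw [mul_smul_comm, smul_mul_assoc]
      _ ≤ r * d * r := by simpa [hr.star_eq] using star_left_conjugate_le_conjugate hcd r
      _ = cfc (fun u => ξ u * u) d := by
          rw [cfc_mul_mul_cfc hd.isSelfAdjoint (by fun_prop)]
          exact cfc_congr fun u hu => by
            linear_combination u * Real.mul_self_sqrt (hξ₀ u hu)
      _ ≤ algebraMap ℝ A M := cfc_le_algebraMap _ M d hM
  have hconj₀ : 0 ≤ δ • (r * (c * c) * r) :=
    smul_nonneg hδ.le (by simpa [hr.star_eq] using star_left_conjugate_nonneg hc.mul_self_nonneg r)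
  have := (CStarAlgebra.norm_le_iff_le_algebraMap _ hM₀ hconj₀).2 hconj
  rw [norm_smul, Real.norm_of_nonneg hδ.le] at this
  rw [← hrr, norm_mul_mul_self_mul_comm hc hr, inv_mul_eq_div, le_div_iff₀' hδ]
  exact this

lemma norm_mul_self_sub_mul_cfc_invSqrtMax_le {c d : A} (hc : IsSelfAdjoint c) {δ : ℝ}
    (hδ : 0 < δ) (hcd : δ • (c * c) ≤ d) {s : ℝ} (hs : 0 < s) :
    ‖c * c - c * (cfc (invSqrtMax s) d * d * cfc (invSqrtMax s) d) * c‖ ≤ δ⁻¹ * s := by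
  have hd : 0 ≤ d := (smul_nonneg hδ.le hc.mul_self_nonneg).trans hcd
  have hψ := continuous_invSqrtMax hs
  have : c * c - c * (cfc (invSqrtMax s) d * d * cfc (invSqrtMax s) d) * c =
      c * cfc (fun u => 1 - invSqrtMax s u * u * invSqrtMax s u) d * c := by
    rw [cfc_mul_mul_cfc hd.isSelfAdjoint hψ, cfc_sub _ _ d, cfc_const_one ℝ d]
    noncomm_ring
  rw [this]
  exact norm_mul_cfc_mul_le hc hδ hcd (by fun_prop)
    (fun u _ => sub_nonneg.2 (invSqrtMax_mul_mul_self_le_one hs u)) hs.le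
    (fun u hu => one_sub_invSqrtMax_mul_mul_self_mul_le hs (spectrum_nonneg_of_nonneg hd hu))

lemma norm_mul_cfc_mul_le_one {c d : A} (hc : IsSelfAdjoint c)
    (hcd : (c * c) * (c * c) ≤ d) {φ : ℝ → ℝ} (hφ : Continuous φ)
    (hφ₀ : ∀ u ∈ spectrum ℝ d, 0 ≤ φ u) (hφ₁ : ∀ u ∈ spectrum ℝ d, φ u * u * φ u ≤ 1) :
    ‖c * cfc φ d * c‖ ≤ 1 := by
  have hd : 0 ≤ d := (hc.mul_self_nonneg.isSelfAdjoint.mul_self_nonneg).trans hcd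
  set w := cfc φ d
  set r := cfc (fun u => √(φ u)) d
  have hw : IsSelfAdjoint w := cfc_predicate _ d
  have hr : IsSelfAdjoint r := cfc_predicate _ d
  have hrr : r * r = w := by
    rw [← cfc_mul _ _ d]
    exact cfc_congr fun u hu => Real.mul_self_sqrt (hφ₀ u hu)
  have hwdw : w * ((c * c) * (c * c)) * w ≤ 1 :=
    calc w * ((c * c) * (c * c)) * w ≤ w * d * w := by
          simpa [hw.star_eq] using star_left_conjugate_le_conjugate hcd w
      _ = cfc (fun u => φ u * u * φ u) d := cfc_mul_mul_cfc hd.isSelfAdjoint hφ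
      _ ≤ 1 := cfc_le_one _ d hφ₁
  have hcw : ‖c * c * w‖ ≤ 1 := by
    have hstar : star (c * c * w) * (c * c * w) = w * ((c * c) * (c * c)) * w := by
      simp only [star_mul, hc.star_eq, hw.star_eq]; noncomm_ring
    have h₀ : 0 ≤ w * ((c * c) * (c * c)) * w := by
      rw [← hstar]; exact star_mul_self_nonneg _
    have h₁ := (CStarAlgebra.norm_le_one_iff_of_nonneg _ h₀).2 hwdw
    rw [← hstar, CStarRing.norm_star_mul_self] at h₁
    nlinarith [norm_nonneg (c * c * w)]
  calc ‖c * w * c‖ = ‖r * (c * c) * r‖ := by rw [← hrr, norm_mul_mul_self_mul_comm hc hr]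
    _ ≤ ‖c * c * (r * r)‖ :=
        norm_mul_mul_le_norm_mul_mul_self hc.mul_self_nonneg.isSelfAdjoint hr
    _ ≤ 1 := by rwa [hrr]

lemma sq_norm_mul_cfc_mul_le {c d : A} (hc : IsSelfAdjoint c) {δ : ℝ} (hδ : 0 < δ)
    (hcd : δ • (c * c) ≤ d) {η : ℝ → ℝ} (hη : Continuous η) {M : ℝ} (hM₀ : 0 ≤ M)
    (hM : ∀ u ∈ spectrum ℝ d, (η u * u) ^ 2 ≤ M) :
    ‖c * cfc η d * c‖ ^ 2 ≤ δ⁻¹ ^ 2 * M := by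
  have hd : 0 ≤ d := (smul_nonneg hδ.le hc.mul_self_nonneg).trans hcd
  set h := cfc η d
  have hh : IsSelfAdjoint h := cfc_predicate _ d
  have hsq : ‖c * h * c‖ ^ 2 = ‖c * (h * (c * c) * h) * c‖ := by
    have hchc : IsSelfAdjoint (c * h * c) := by simpa [hc.star_eq] using hh.conjugate c
    rw [sq, ← CStarRing.norm_star_mul_self, hchc.star_eq]
    congr 1; noncomm_ring
  have hle : δ • (c * (h * (c * c) * h) * c) ≤ c * cfc (fun u => η u * u * η u) d * c :=
    calc δ • (c * (h * (c * c) * h) * c) = c * (h * (δ • (c * c)) * h) * c := by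
          simp only [mul_smul_comm, smul_mul_assoc]
      _ ≤ c * (h * d * h) * c := by
          have := star_left_conjugate_le_conjugate hcd h
          simpa [hh.star_eq, hc.star_eq] using star_left_conjugate_le_conjugate this c
      _ = c * cfc (fun u => η u * u * η u) d * c := by rw [cfc_mul_mul_cfc hd.isSelfAdjoint hη]
  have h₀ : 0 ≤ δ • (c * (h * (c * c) * h) * c) := by
    refine smul_nonneg hδ.le ?_
    simpa [hh.star_eq, hc.star_eq, mul_assoc] using
      star_left_conjugate_nonneg hc.mul_self_nonneg (h * c)
  have hnorm := CStarAlgebra.norm_le_norm_of_nonneg_of_le h₀ hle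
  rw [norm_smul, Real.norm_of_nonneg hδ.le] at hnorm
  have hkey := norm_mul_cfc_mul_le hc hδ hcd (ξ := fun u => η u * u * η u) (by fun_prop)
    (fun u hu => by
      have := spectrum_nonneg_of_nonneg hd hu
      nlinarith [mul_self_nonneg (η u)])
    hM₀ (fun u hu => by linear_combination hM u hu)
  rw [hsq, sq, mul_assoc δ⁻¹, inv_mul_eq_div, le_div_iff₀' hδ]
  exact hnorm.trans hkey

theorem exists_norm_le_one_mul_self_eq_star_mul_mul {c a : A} (hc : IsSelfAdjoint c) {δ : ℝ}
    (hδ : 0 < δ) (h : δ • (c * c) + (c * c) * (c * c) ≤ c * a * c) :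
    ∃ f : A, ‖f‖ ≤ 1 ∧ c * c = star f * a * f := by
  set d := c * a * c
  have hcc : 0 ≤ c * c := hc.mul_self_nonneg
  have hd₁ : δ • (c * c) ≤ d := le_of_add_le_of_nonneg_left h (hcc.isSelfAdjoint.mul_self_nonneg)
  have hd₂ : (c * c) * (c * c) ≤ d := le_of_add_le_of_nonneg_right h (smul_nonneg hδ.le hcc)
  set F : ℝ → A := fun s => c * cfc (invSqrtMax s) d * c
  obtain ⟨f, hf⟩ := exists_tendsto_nhdsGT_zero_of_sq_norm_sub_le (F := F) (C := δ⁻¹ ^ 2)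
    fun s t hs ht => by
      have hψs := continuous_invSqrtMax hs
      have hψt := continuous_invSqrtMax ht
      have : F s - F t = c * cfc (fun u => invSqrtMax s u - invSqrtMax t u) d * c := by
        simp only [F]; rw [cfc_sub _ _ d]; noncomm_ring
      rw [this]
      exact sq_norm_mul_cfc_mul_le hc hδ hd₁ (by fun_prop) (le_max_of_le_left hs.le)
        fun u hu => sq_sub_invSqrtMax_mul_le hs ht (spectrum_nonneg_of_nonneg
          ((smul_nonneg hδ.le hcc).trans hd₁) hu)
  have hF : ∀ s, IsSelfAdjoint (F s) := fun s => by
    simpa [hc.star_eq] using (cfc_predicate (invSqrtMax s) d).conjugate c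
  have hlim : Tendsto (fun s => star (F s) * a * F s) (𝓝[>] 0) (𝓝 (c * c)) := by
    rw [tendsto_iff_norm_sub_tendsto_zero]
    refine squeeze_zero' (Eventually.of_forall fun _ => norm_nonneg _) ?_
      (((continuous_const.mul continuous_id).tendsto' 0 0 (mul_zero δ⁻¹)).mono_left
        nhdsWithin_le_nhds)
    filter_upwards [self_mem_nhdsWithin] with s hs
    rw [norm_sub_rev, (hF s).star_eq]
    simpa [F, d, mul_assoc] using norm_mul_self_sub_mul_cfc_invSqrtMax_le hc hδ hd₁ hs
  refine ⟨f, le_of_tendsto hf.norm (eventually_nhdsWithin_of_forall fun s hs => ?_),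
    tendsto_nhds_unique hlim ((hf.star.mul tendsto_const_nhds).mul hf)⟩
  exact norm_mul_cfc_mul_le_one hc hd₂ (continuous_invSqrtMax hs)
    (fun u _ => invSqrtMax_nonneg u) fun u _ => invSqrtMax_mul_mul_self_le_one hs u

end CStarAlgebra

theorem stmt1_general {A : Type*} [CStarAlgebra A] [PartialOrder A] [StarOrderedRing A]
    (τ : ℝ) (a b : A) (hb0 : 0 ≤ b)
    (hb : b ≤ a + (τ : ℂ) • (1 : A)) (ε : ℝ) (hε : τ < ε) :
    ∃ f : A, ‖f‖ ≤ 1 ∧ cfc (fun t : ℝ => max (t - ε) 0) b = star f * a * f := by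
  set c := sqrtPosPartSub ε b
  have hc : IsSelfAdjoint c := isSelfAdjoint_sqrtPosPartSub ε b
  have hle : b - algebraMap ℝ A τ ≤ a := by
    rwa [sub_le_iff_le_add, Algebra.algebraMap_eq_smul_one, ← Complex.coe_smul]
  have hconj := star_left_conjugate_le_conjugate hle c
  rw [hc.star_eq, sqrtPosPartSub_mul_sub_algebraMap_mul hb0.isSelfAdjoint] at hconj
  obtain ⟨f, hf, hcf⟩ := exists_norm_le_one_mul_self_eq_star_mul_mul hc (sub_pos.2 hε) hconj
  exact ⟨f, hf, sqrtPosPartSub_mul_self ε b ▸ hcf⟩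

/-- If `0 ≤ b ≤ a + τ·1` and `ε > τ`, then there is a contraction `f` with
`(b - ε)₊ = f* a f`. -/
theorem stmt1 {A : Type*} [CStarAlgebra A] [PartialOrder A] [StarOrderedRing A]
    (τ : ℝ) (hτ : 0 ≤ τ) (a b : A) (ha : 0 ≤ a) (hb0 : 0 ≤ b)
    (hb : b ≤ a + (τ : ℂ) • (1 : A)) (ε : ℝ) (hε : τ < ε) :
    ∃ f : A, ‖f‖ ≤ 1 ∧ cfc (fun t : ℝ => max (t - ε) 0) b = star f * a * f :=
  stmt1_general τ a b hb0 hb ε hε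
end

section
/- Let X be a locally compact Hausdorff space and S a finite set of homeomorphisms of X, each of whose fixed-point sets has empty interior. Then every non-empty open subset U of X contains a non-empty open subset V such that α(V) ∩ V = ∅ for all α ∈ S. -/
open Set

section

variable {X : Type*} [TopologicalSpace X]

lemma exists_ne_of_interior_fixedPoints_eq_empty {f : X → X}
    (hfix : interior {x | f x = x} = ∅) {U : Set X} (hU : IsOpen U) (hne : U.Nonempty) :
    ∃ x ∈ U, f x ≠ x := by
  by_contra! h
  have hUfix : U ⊆ interior {x | f x = x} := interior_maximal h hU
  rw [hfix, subset_empty_iff] at hUfix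
  exact hne.ne_empty hUfix

/-- Separate a non-fixed point `x ∈ U` from `f x` by open sets `W₁ ∋ f x`, `W₂ ∋ x`;
then `V = U ∩ W₂ ∩ f⁻¹ W₁` works since `f '' V ⊆ W₁`. -/
lemma exists_isOpen_subset_image_inter_eq_empty [T2Space X] {f : X → X} (hf : Continuous f)
    (hfix : interior {x | f x = x} = ∅) {U : Set X} (hU : IsOpen U) (hne : U.Nonempty) :
    ∃ V ⊆ U, IsOpen V ∧ V.Nonempty ∧ f '' V ∩ V = ∅ := by
  obtain ⟨x, hxU, hx⟩ := exists_ne_of_interior_fixedPoints_eq_empty hfix hU hne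
  obtain ⟨W₁, W₂, hW₁, hW₂, hxW₁, hxW₂, hW⟩ := t2_separation hx
  refine ⟨U ∩ W₂ ∩ f ⁻¹' W₁, fun y hy => hy.1.1, (hU.inter hW₂).inter (hW₁.preimage hf),
    ⟨x, ⟨hxU, hxW₂⟩, hxW₁⟩, ?_⟩
  refine eq_empty_of_forall_notMem ?_
  rintro _ ⟨⟨y, hy, rfl⟩, hfy⟩
  exact hW.le_bot ⟨hy.2, hfy.1.2⟩

lemma exists_isOpen_subset_forall_of_finite {ι : Type*} {s : Set ι} (hs : s.Finite)
    {P : ι → Set X → Prop} (hP_anti : ∀ i {V W}, V ⊆ W → P i W → P i V)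
    (hP : ∀ i ∈ s, ∀ U, IsOpen U → U.Nonempty → ∃ V ⊆ U, IsOpen V ∧ V.Nonempty ∧ P i V)
    {U : Set X} (hU : IsOpen U) (hne : U.Nonempty) :
    ∃ V ⊆ U, IsOpen V ∧ V.Nonempty ∧ ∀ i ∈ s, P i V := by
  induction s, hs using Set.Finite.induction_on generalizing U with
  | empty => exact ⟨U, subset_rfl, hU, hne, fun _ hi => hi.elim⟩
  | @insert i s _ _ ih =>
    obtain ⟨W, hWU, hW, hWne, hiW⟩ := hP i (mem_insert i s) U hU hne
    obtain ⟨V, hVW, hV, hVne, hsV⟩ :=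
      ih (fun j hj => hP j (mem_insert_of_mem i hj)) hW hWne
    refine ⟨V, hVW.trans hWU, hV, hVne, ?_⟩
    rintro j (rfl | hj)
    · exact hP_anti j hVW hiW
    · exact hsV j hj

end

theorem stmt3_general {X : Type*} [TopologicalSpace X] [T2Space X]
    (S : Set (X ≃ₜ X)) (hS : S.Finite)
    (hfix : ∀ α ∈ S, interior {x : X | α x = x} = ∅) :
    ∀ U : Set X, IsOpen U → U.Nonempty →
      ∃ V : Set X, IsOpen V ∧ V.Nonempty ∧ V ⊆ U ∧ ∀ α ∈ S, (⇑α '' V) ∩ V = ∅ := by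
  intro U hU hne
  obtain ⟨V, hVU, hV, hVne, hVS⟩ := exists_isOpen_subset_forall_of_finite hS
    (P := fun (α : X ≃ₜ X) V => ⇑α '' V ∩ V = ∅)
    (fun α V W hVW hW => subset_empty_iff.mp (hW ▸ inter_subset_inter (image_mono hVW) hVW))
    (fun α hα _ => exists_isOpen_subset_image_inter_eq_empty α.continuous (hfix α hα)) hU hne
  exact ⟨V, hV, hVne, hVU, hVS⟩

/-- If `S` is a finite set of homeomorphisms of a locally compact Hausdorff space
`X`, each of whose fixed-point sets has empty interior, then every non-empty open `U ⊆ X`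
contains a non-empty open `V` with `α(V) ∩ V = ∅` for all `α ∈ S`. -/
theorem stmt3 {X : Type*} [TopologicalSpace X] [LocallyCompactSpace X] [T2Space X]
    (S : Set (X ≃ₜ X)) (hS : S.Finite)
    (hfix : ∀ α ∈ S, interior {x : X | α x = x} = ∅) :
    ∀ U : Set X, IsOpen U → U.Nonempty →
      ∃ V : Set X, IsOpen V ∧ V.Nonempty ∧ V ⊆ U ∧ ∀ α ∈ S, (⇑α '' V) ∩ V = ∅ :=
  stmt3_general S hS hfix
end

section
/- Let a discrete group G act by homeomorphisms α on a locally compact Hausdorff space X. The induced action σ on C₀(X) (given by σ_g(f) = f ∘ α_g⁻¹) is G-separating if and only if the action α is topologically G-separating, i.e., for all open U₁, U₂ ⊆ X and compact K₁ ⊆ U₁, K₂ ⊆ U₂ there exist g₁, g₂ ∈ G with α_{g₁}(K₁) ⊆ U₁, α_{g₂}(K₂) ⊆ U₂, and α_{g₁}(K₁) ∩ α_{g₂}(K₂) = ∅. -/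
/-!
For `a ≥ 0` and `δ > 0` the set `{δ ≤ ‖a‖}` is compact and contained in the open support of `a`.
Topological separation moves these sets for `a` and `b` to disjoint compact subsets of the
supports, with disjoint open neighbourhoods `W₁`, `W₂`. Then `d = φ * √(a ∘ T⁻¹ / a)`, with `φ` an Urysohn function equal to `1` on `T {δ ≤ ‖a‖}` and supported
in `W₁ ∩ supp a`, gives `|d|² a - a ∘ T⁻¹ = (φ² - 1) (a ∘ T⁻¹)`, of norm at most `δ`. The two `d`'s
have disjoint supports, so `d₁* c d₂ = 0`.

Conversely, test the C*-condition with `ε = 1/2` on Urysohn functions `a`, `b` equal to `1` on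
`K₁`, `K₂` and supported in `U₁`, `U₂`, and on `c` equal to `1` on both supports. On `gᵢ Kᵢ`
we get `|dᵢ|² aᵢ > 1/2`, so `gᵢ Kᵢ ⊆ supp aᵢ ⊆ Uᵢ` and `|dᵢ|² > 1/2`; at a common point of
`g₁ K₁` and `g₂ K₂` this would give `|d₁* c d₂| > 1/2`.
-/

open scoped ComplexOrder ZeroAtInfty
open Set Function

namespace ZeroAtInftyContinuousMap

variable {X β : Type*} [TopologicalSpace X]

lemma norm_apply_le [SeminormedAddCommGroup β] (f : C₀(X, β)) (x : X) : ‖f x‖ ≤ ‖f‖ := by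
  rw [← norm_toBCF_eq_norm]
  exact f.toBCF.norm_coe_le_norm x

lemma norm_le [SeminormedAddCommGroup β] {f : C₀(X, β)} {C : ℝ} (hC : 0 ≤ C) :
    ‖f‖ ≤ C ↔ ∀ x, ‖f x‖ ≤ C := by
  rw [← norm_toBCF_eq_norm]
  exact BoundedContinuousFunction.norm_le hC

lemma isCompact_setOf_le_norm [SeminormedAddCommGroup β] (f : C₀(X, β)) {δ : ℝ} (hδ : 0 < δ) :
    IsCompact {x | δ ≤ ‖f x‖} := by
  obtain ⟨K, hK, hsub⟩ := Filter.mem_cocompact'.1 <|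
    (zero_at_infty f).eventually (eventually_norm_sub_lt (0 : β) hδ)
  refine hK.of_isClosed_subset (isClosed_le continuous_const (map_continuous f).norm) ?_
  intro x hx
  exact hsub (by simpa using hx)

noncomputable def ofRealOfHasCompactSupport (f : C(X, ℝ)) (hf : HasCompactSupport f) :
    C₀(X, ℂ) where
  toFun x := f x
  continuous_toFun := by fun_prop
  zero_at_infty' := (hf.comp_left Complex.ofReal_zero).is_zero_at_infty

@[simp]
lemma ofRealOfHasCompactSupport_apply (f : C(X, ℝ)) (hf : HasCompactSupport f) (x : X) :
    ofRealOfHasCompactSupport f hf x = f x := rfl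

@[simp]
lemma support_ofRealOfHasCompactSupport (f : C(X, ℝ)) (hf : HasCompactSupport f) :
    support (ofRealOfHasCompactSupport f hf) = support f := by
  ext x
  simp

lemma exists_one_of_isCompact_subset_isOpen [LocallyCompactSpace X] [T2Space X] {K U : Set X}
    (hK : IsCompact K) (hU : IsOpen U) (hKU : K ⊆ U) :
    ∃ a : C₀(X, ℂ), EqOn a 1 K ∧ HasCompactSupport a ∧ tsupport a ⊆ U ∧
      ∀ x, 0 ≤ a x ∧ ‖a x‖ ≤ 1 := by
  obtain ⟨f, hfK, hfc, hfU, hf01⟩ := exists_continuousMap_one_of_isCompact_subset_isOpen hK hU hKU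
  replace hfc : HasCompactSupport f := hfc
  have htsupp : tsupport (ofRealOfHasCompactSupport f hfc) = tsupport f := by
    rw [tsupport, support_ofRealOfHasCompactSupport, tsupport]
  refine ⟨ofRealOfHasCompactSupport f hfc, fun x hx => by simp [hfK hx], ?_, htsupp ▸ hfU,
    fun x => ?_⟩
  · rw [HasCompactSupport, htsupp]
    exact hfc
  · simpa [abs_of_nonneg (hf01 x).1] using hf01 x

lemma star_mul_mul_eq_zero_of_disjoint_support {d₁ d₂ : C₀(X, ℂ)} (c : C₀(X, ℂ))
    (h : Disjoint (support d₁) (support d₂)) : star d₁ * c * d₂ = 0 := by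
  ext x
  by_cases hx : d₁ x = 0
  · simp [mul_apply, hx]
  · simp [mul_apply, notMem_support.1 (disjoint_left.1 h hx)]

lemma star_mul_mul_sub_comp_apply (a d : C₀(X, ℂ)) (T : X ≃ₜ X) (x : X) :
    (star d * a * d - a.comp T.symm.toCocompactMap) x = ‖d x‖ ^ 2 * a x - a (T.symm x) := by
  rw [sub_apply, mul_apply, mul_apply, star_apply, ← Complex.conj_mul', mul_right_comm]
  rfl

end ZeroAtInftyContinuousMap

open ZeroAtInftyContinuousMap

section

variable {X : Type*} [TopologicalSpace X]

lemma image_subset_support_and_half_lt_sq_norm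
    {a : C₀(X, ℂ)} (d : C₀(X, ℂ)) (T : X ≃ₜ X) (ha : ∀ x, ‖a x‖ ≤ 1)
    (H : ‖star d * a * d - a.comp T.symm.toCocompactMap‖ < 1 / 2) {K : Set X} (hK : EqOn a 1 K) :
    T '' K ⊆ support a ∧ ∀ x ∈ T '' K, 1 / 2 < ‖d x‖ ^ 2 := by
  suffices ∀ z ∈ K, a (T z) ≠ 0 ∧ 1 / 2 < ‖d (T z)‖ ^ 2 by
    constructor <;> rintro _ ⟨z, hz, rfl⟩
    exacts [(this z hz).1, (this z hz).2]
  intro z hz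
  have hTz := (H.trans_le' ((star d * a * d - a.comp T.symm.toCocompactMap).norm_apply_le (T z)))
  rw [star_mul_mul_sub_comp_apply, T.symm_apply_apply, hK hz, Pi.one_apply] at hTz
  have hlarge : 1 / 2 < ‖d (T z)‖ ^ 2 * ‖a (T z)‖ := by
    have := norm_sub_norm_le (1 : ℂ) (‖d (T z)‖ ^ 2 * a (T z))
    rw [norm_sub_rev] at this
    simp only [norm_one, norm_mul, norm_pow, Complex.norm_real, norm_norm] at this
    linarith
  refine ⟨fun h0 => ?_, hlarge.trans_le (mul_le_of_le_one_right (sq_nonneg _) (ha _))⟩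
  norm_num [h0] at hlarge

lemma exists_support_subset_and_norm_star_mul_mul_sub_comp_le [LocallyCompactSpace X] [T2Space X]
    (a : C₀(X, ℂ)) (ha : ∀ x, 0 ≤ a x) {δ : ℝ} (hδ : 0 < δ) (T : X ≃ₜ X) {W : Set X}
    (hW : IsOpen W) (hKW : T '' {x | δ ≤ ‖a x‖} ⊆ W) (hWa : W ⊆ support a) :
    ∃ d : C₀(X, ℂ), support d ⊆ W ∧ ‖star d * a * d - a.comp T.symm.toCocompactMap‖ ≤ δ := by
  obtain ⟨φ, hφK, hφc, hφW, hφ01⟩ := exists_continuousMap_one_of_isCompact_subset_isOpen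
    ((a.isCompact_setOf_le_norm hδ).image T.continuous) hW hKW
  have hφa : ∀ x, a x = 0 → φ x = 0 := fun x hx =>
    image_eq_zero_of_notMem_tsupport fun h => hWa (hφW h) hx
  set ψ : X → ℝ := fun x => φ x * √(‖a (T.symm x)‖ / ‖a x‖)
  have hψc : Continuous ψ := continuous_of_tsupport fun x hx => by
    have hax : ‖a x‖ ≠ 0 := norm_ne_zero_iff.2 (hWa (hφW (tsupport_mul_subset_left hx)))
    exact (map_continuous φ).continuousAt.mul
      (((map_continuous a).comp T.symm.continuous).norm.continuousAt.div
        (map_continuous a).norm.continuousAt hax).sqrt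
  have hψ_sq : ∀ x, ψ x ^ 2 * ‖a x‖ = φ x ^ 2 * ‖a (T.symm x)‖ := fun x => by
    by_cases hx : a x = 0
    · simp [ψ, hx, hφa x hx]
    · rw [mul_pow, Real.sq_sqrt (by positivity), mul_assoc,
        div_mul_cancel₀ _ (norm_ne_zero_iff.2 hx)]
  refine ⟨ofRealOfHasCompactSupport ⟨ψ, hψc⟩ (HasCompactSupport.mul_right hφc), fun x hx => ?_,
    (norm_le hδ.le).2 fun x => ?_⟩
  · have hφx : φ x ≠ 0 := fun h => hx (by simp [ψ, h])
    exact hφW (subset_tsupport _ hφx)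
  · rw [star_mul_mul_sub_comp_apply]
    change ‖(‖((ψ x : ℝ) : ℂ)‖ : ℂ) ^ 2 * a x - a (T.symm x)‖ ≤ δ
    rw [Complex.eq_coe_norm_of_nonneg (ha x), Complex.eq_coe_norm_of_nonneg (ha (T.symm x)),
      Complex.norm_real, Real.norm_eq_abs, ← Complex.ofReal_pow, sq_abs, ← Complex.ofReal_mul,
      ← Complex.ofReal_sub, Complex.norm_real, Real.norm_eq_abs, hψ_sq, ← sub_one_mul]
    by_cases hx : δ ≤ ‖a (T.symm x)‖
    · rw [hφK ⟨T.symm x, hx, T.apply_symm_apply x⟩]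
      simp [hδ.le]
    · have hφ_sq : φ x ^ 2 ≤ 1 := pow_le_one₀ (hφ01 x).1 (hφ01 x).2
      rw [abs_le]
      constructor <;> nlinarith [norm_nonneg (a (T.symm x)), sq_nonneg (φ x), not_le.1 hx]

variable {G : Type*}

def IsCStarSeparating (α : G → X ≃ₜ X) : Prop :=
  ∀ a b c : C₀(X, ℂ), (∀ x, 0 ≤ a x) → (∀ x, 0 ≤ b x) → ∀ ε : ℝ, 0 < ε →
    ∃ (d₁ d₂ : C₀(X, ℂ)) (g₁ g₂ : G),
      ‖star d₁ * a * d₁ - a.comp (α g₁).symm.toCocompactMap‖ < ε ∧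
      ‖star d₂ * b * d₂ - b.comp (α g₂).symm.toCocompactMap‖ < ε ∧
      ‖star d₁ * c * d₂‖ < ε

def IsTopologicallySeparating (α : G → X ≃ₜ X) : Prop :=
  ∀ U₁ U₂ : Set X, IsOpen U₁ → IsOpen U₂ → ∀ K₁ K₂ : Set X, IsCompact K₁ → IsCompact K₂ →
    K₁ ⊆ U₁ → K₂ ⊆ U₂ →
      ∃ g₁ g₂ : G, α g₁ '' K₁ ⊆ U₁ ∧ α g₂ '' K₂ ⊆ U₂ ∧ α g₁ '' K₁ ∩ α g₂ '' K₂ = ∅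

variable [LocallyCompactSpace X] [T2Space X] {α : G → X ≃ₜ X}

theorem IsCStarSeparating.isTopologicallySeparating (h : IsCStarSeparating α) :
    IsTopologicallySeparating α := by
  intro U₁ U₂ hU₁ hU₂ K₁ K₂ hK₁ hK₂ hKU₁ hKU₂
  obtain ⟨a₁, ha₁K, ha₁c, ha₁U, ha₁⟩ := exists_one_of_isCompact_subset_isOpen hK₁ hU₁ hKU₁
  obtain ⟨a₂, ha₂K, ha₂c, ha₂U, ha₂⟩ := exists_one_of_isCompact_subset_isOpen hK₂ hU₂ hKU₂
  obtain ⟨c, hc, -, -, -⟩ :=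
    exists_one_of_isCompact_subset_isOpen (ha₁c.union ha₂c) isOpen_univ (subset_univ _)
  obtain ⟨d₁, d₂, g₁, g₂, H₁, H₂, H⟩ :=
    h a₁ a₂ c (fun x => (ha₁ x).1) (fun x => (ha₂ x).1) (1 / 2) one_half_pos
  obtain ⟨hsupp₁, hd₁⟩ :=
    image_subset_support_and_half_lt_sq_norm d₁ (α g₁) (fun x => (ha₁ x).2) H₁ ha₁K
  obtain ⟨hsupp₂, hd₂⟩ :=
    image_subset_support_and_half_lt_sq_norm d₂ (α g₂) (fun x => (ha₂ x).2) H₂ ha₂K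
  refine ⟨g₁, g₂, hsupp₁.trans ((subset_tsupport _).trans ha₁U),
    hsupp₂.trans ((subset_tsupport _).trans ha₂U), eq_empty_of_forall_notMem ?_⟩
  rintro x ⟨hx₁, hx₂⟩
  have hcx : c x = 1 := hc (Or.inl (subset_tsupport _ (hsupp₁ hx₁)))
  have hprod : 1 / 2 < ‖d₁ x‖ * ‖d₂ x‖ := by
    have : (1 / 2) ^ 2 < (‖d₁ x‖ * ‖d₂ x‖) ^ 2 := by
      rw [mul_pow]
      nlinarith [hd₁ x hx₁, hd₂ x hx₂]
    exact lt_of_pow_lt_pow_left₀ 2 (by positivity) this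
  have := H.trans_le' ((star d₁ * c * d₂).norm_apply_le x)
  rw [mul_apply, mul_apply, star_apply, hcx, mul_one, norm_mul, norm_star] at this
  linarith

theorem IsTopologicallySeparating.isCStarSeparating (h : IsTopologicallySeparating α) :
    IsCStarSeparating α := by
  intro a b c ha hb ε hε
  have hsupp : ∀ f : C₀(X, ℂ), {x | ε / 2 ≤ ‖f x‖} ⊆ support f := fun f x hx =>
    norm_pos_iff.1 ((half_pos hε).trans_le hx)
  have hKa := a.isCompact_setOf_le_norm (half_pos hε)
  have hKb := b.isCompact_setOf_le_norm (half_pos hε)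
  have hUa := (map_continuous a).isOpen_support
  have hUb := (map_continuous b).isOpen_support
  obtain ⟨g₁, g₂, hg₁, hg₂, hdisj⟩ := h _ _ hUa hUb _ _ hKa hKb (hsupp a) (hsupp b)
  obtain ⟨W₁, W₂, hW₁, hW₂, hKW₁, hKW₂, hW⟩ := SeparatedNhds.of_isCompact_isCompact
    (hKa.image (α g₁).continuous) (hKb.image (α g₂).continuous)
    (disjoint_iff_inter_eq_empty.2 hdisj)
  obtain ⟨d₁, hd₁, H₁⟩ := exists_support_subset_and_norm_star_mul_mul_sub_comp_le a ha (half_pos hε)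
    (α g₁) (hW₁.inter hUa) (subset_inter hKW₁ hg₁) inter_subset_right
  obtain ⟨d₂, hd₂, H₂⟩ := exists_support_subset_and_norm_star_mul_mul_sub_comp_le b hb (half_pos hε)
    (α g₂) (hW₂.inter hUb) (subset_inter hKW₂ hg₂) inter_subset_right
  refine ⟨d₁, d₂, g₁, g₂, H₁.trans_lt (half_lt_self hε), H₂.trans_lt (half_lt_self hε), ?_⟩
  rw [star_mul_mul_eq_zero_of_disjoint_support c
    (hW.mono (hd₁.trans inter_subset_left) (hd₂.trans inter_subset_left)), norm_zero]
  exact hε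

end

theorem stmt4_general {X G : Type*} [TopologicalSpace X] [LocallyCompactSpace X] [T2Space X]
    (α : G → X ≃ₜ X) :
    (∀ a b c : ZeroAtInftyContinuousMap X ℂ, (∀ x, 0 ≤ a x) → (∀ x, 0 ≤ b x) →
      ∀ ε : ℝ, 0 < ε →
        ∃ (d₁ d₂ : ZeroAtInftyContinuousMap X ℂ) (g₁ g₂ : G),
          ‖star d₁ * a * d₁ - a.comp (α g₁).symm.toCocompactMap‖ < ε ∧
          ‖star d₂ * b * d₂ - b.comp (α g₂).symm.toCocompactMap‖ < ε ∧
          ‖star d₁ * c * d₂‖ < ε) ↔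
    (∀ U₁ U₂ : Set X, IsOpen U₁ → IsOpen U₂ → ∀ K₁ K₂ : Set X, IsCompact K₁ → IsCompact K₂ →
      K₁ ⊆ U₁ → K₂ ⊆ U₂ →
        ∃ g₁ g₂ : G, ⇑(α g₁) '' K₁ ⊆ U₁ ∧ ⇑(α g₂) '' K₂ ⊆ U₂ ∧
          (⇑(α g₁) '' K₁) ∩ (⇑(α g₂) '' K₂) = ∅) :=
  ⟨IsCStarSeparating.isTopologicallySeparating, IsTopologicallySeparating.isCStarSeparating⟩

/-- For a discrete group `G` acting by homeomorphisms `α` on a locally compact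
Hausdorff space `X`, the induced action `σ_g f = f ∘ α_{g}⁻¹` on `C₀(X)` is `G`-separating
iff the action is topologically `G`-separating. -/
theorem stmt4 {X G : Type*} [TopologicalSpace X] [LocallyCompactSpace X] [T2Space X] [Group G]
    (α : G → X ≃ₜ X) (hα : ∀ g h x, α (g * h) x = α g (α h x)) :
    (∀ a b c : ZeroAtInftyContinuousMap X ℂ, (∀ x, 0 ≤ a x) → (∀ x, 0 ≤ b x) →
      ∀ ε : ℝ, 0 < ε →
        ∃ (d₁ d₂ : ZeroAtInftyContinuousMap X ℂ) (g₁ g₂ : G),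
          ‖star d₁ * a * d₁ - a.comp (α g₁).symm.toCocompactMap‖ < ε ∧
          ‖star d₂ * b * d₂ - b.comp (α g₂).symm.toCocompactMap‖ < ε ∧
          ‖star d₁ * c * d₂‖ < ε) ↔
    (∀ U₁ U₂ : Set X, IsOpen U₁ → IsOpen U₂ → ∀ K₁ K₂ : Set X, IsCompact K₁ → IsCompact K₂ →
      K₁ ⊆ U₁ → K₂ ⊆ U₂ →
        ∃ g₁ g₂ : G, ⇑(α g₁) '' K₁ ⊆ U₁ ∧ ⇑(α g₂) '' K₂ ⊆ U₂ ∧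
          (⇑(α g₁) '' K₁) ∩ (⇑(α g₂) '' K₂) = ∅) :=
  stmt4_general α
end

section
/- Let A be a unital commutative C*-algebra (for instance A = C(X) for a compact Hausdorff space X). Then no action of any discrete group G on A is G-separating. -/
/-- No action of a discrete group `G` on a non-zero unital commutative C*-algebra
`A` is `G`-separating. -/
theorem stmt6 {A G : Type*} [CommCStarAlgebra A] [Nontrivial A]
    [PartialOrder A] [StarOrderedRing A] [Group G]
    (σ : G → A ≃⋆ₐ[ℂ] A) (hσ : ∀ g h x, σ (g * h) x = σ g (σ h x)) :
    ¬ (∀ a b : A, 0 ≤ a → 0 ≤ b → ∀ c : A, ∀ ε : ℝ, 0 < ε →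
        ∃ (s t : A) (g h : G),
          ‖star s * a * s - σ g a‖ < ε ∧ ‖star t * b * t - σ h b‖ < ε ∧
          ‖star s * c * t‖ < ε) := by
  intro H
  obtain ⟨s, t, g, h, h1, h2, h3⟩ :=
    H 1 1 zero_le_one zero_le_one 1 (1/3) (by norm_num)
  simp only [mul_one, map_one] at h1 h2 h3
  set x := star s * s with hx
  set y := star t * t with hy
  set u := star s * t with hu
  have key : u * star u = x * y := by
    simp only [hu, hx, hy, star_mul, star_star]
    ring
  have hn : ‖u‖ * ‖u‖ = ‖x * y‖ := by
    rw [← key, CStarRing.norm_self_mul_star]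
  have hxn : ‖x‖ ≤ 4/3 := by
    calc ‖x‖ ≤ ‖x - 1‖ + ‖(1 : A)‖ := by
          simpa using norm_add_le (x - 1) 1
      _ ≤ 4/3 := by rw [norm_one]; linarith
  have hxy1 : ‖x * y - 1‖ ≤ ‖x‖ * ‖y - 1‖ + ‖x - 1‖ := by
    calc ‖x * y - 1‖ = ‖x * (y - 1) + (x - 1)‖ := by ring_nf
      _ ≤ ‖x * (y - 1)‖ + ‖x - 1‖ := norm_add_le _ _
      _ ≤ ‖x‖ * ‖y - 1‖ + ‖x - 1‖ := by
          gcongr; exact norm_mul_le _ _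
  have hlow : (2/9 : ℝ) ≤ ‖x * y‖ := by
    have h4 : ‖(1 : A)‖ - ‖x * y - 1‖ ≤ ‖x * y‖ := by
      have := norm_sub_norm_le (1 : A) (x * y)
      have h5 : ‖(1 : A) - x * y‖ = ‖x * y - 1‖ := by rw [norm_sub_rev]
      linarith
    have hy1 : ‖y - 1‖ < 1/3 := h2
    have hx1 : ‖x - 1‖ < 1/3 := h1
    have : ‖x‖ * ‖y - 1‖ ≤ (4/3) * (1/3) := by
      apply mul_le_mul hxn (le_of_lt hy1) (norm_nonneg _) (by norm_num)
    rw [norm_one] at h4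
    linarith
  have hup : ‖x * y‖ < 1/9 := by
    rw [← hn]
    have hu0 : (0 : ℝ) ≤ ‖u‖ := norm_nonneg _
    nlinarith [h3]
  linarith
end

section
/- Let (A, G, σ) be a C*-dynamical system with A unital and σ an n-majorizing action for some n ≥ 1. Then σ is (n+1)-covering, i.e., for every non-zero a ∈ A₊ and ε > 0 there exist d₁,…,d_{n+1} ∈ A and g₁,…,g_{n+1} ∈ G with ‖Σⱼ dⱼ* σ_{gⱼ}(a) dⱼ − 1‖ < ε. -/
/-!
Normalise `σ_e(a)` to `c := ‖σ_e(a)‖⁻¹ • σ_e(a)`. Then `‖c‖ = 1` lies in the spectrum of `c`, so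
`b := 1 - c ^ 3` is positive but not invertible, and majorization approximates `b` by `n` terms. The
missing `c ^ 3` is exactly the term `d* σ_e(a) d` with `d = ‖σ_e(a)‖^{-1/2} • c`, which gives
`n + 1` terms approximating `1`.
-/

theorem not_isUnit_one_sub_pow {R : Type*} [Ring R] {x : R} (hx : ¬IsUnit (1 - x)) (n : ℕ) :
    ¬IsUnit (1 - x ^ n) := by
  have hcomm : Commute (1 - x) (∑ i ∈ Finset.range n, x ^ i) :=
    (mul_neg_geom_sum x n).trans (geom_sum_mul_neg x n).symm
  rw [← mul_neg_geom_sum]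
  exact fun h ↦ hx (hcomm.isUnit_mul_iff.mp h).1

section CStarAlgebra

variable {A : Type*} [CStarAlgebra A] [PartialOrder A] [StarOrderedRing A]

theorem CStarAlgebra.not_isUnit_one_sub_of_norm_eq_one {c : A} (hc : 0 ≤ c) (hc1 : ‖c‖ = 1) :
    ¬IsUnit (1 - c) := by
  have : Nontrivial A := nontrivial_of_ne c 0 (by rintro rfl; simp at hc1)
  have hspec := CStarAlgebra.norm_mem_spectrum_of_nonneg hc
  rw [hc1, spectrum.mem_iff] at hspec
  simpa using hspec

theorem CStarAlgebra.one_sub_pow_nonneg {c : A} (hc : 0 ≤ c) (hc1 : ‖c‖ ≤ 1) (n : ℕ) :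
    0 ≤ 1 - c ^ n := by
  rcases n.eq_zero_or_pos with rfl | hn
  · simp
  rw [sub_nonneg, ← CStarAlgebra.norm_le_one_iff_of_nonneg _ (CStarAlgebra.pow_nonneg hc n)]
  exact (norm_pow_le' c hn).trans (pow_le_one₀ (norm_nonneg c) hc1)

theorem CStarAlgebra.exists_one_sub_star_mul_mul_nonneg_not_isUnit {a : A} (ha : 0 ≤ a)
    (ha0 : a ≠ 0) :
    ∃ d : A, 0 ≤ 1 - star d * a * d ∧ ¬IsUnit (1 - star d * a * d) := by
  have hnorm : 0 < ‖a‖ := norm_pos_iff.mpr ha0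
  set c : A := ‖a‖⁻¹ • a
  have hc : 0 ≤ c := smul_nonneg (inv_nonneg.mpr hnorm.le) ha
  have hc1 : ‖c‖ = 1 := by simp [c, norm_smul, hnorm.ne']
  set t : ℝ := √‖a‖⁻¹
  have hcube : star (t • c) * a * (t • c) = c ^ 3 := by
    have ht : t * t = ‖a‖⁻¹ := Real.mul_self_sqrt (by positivity)
    rw [star_smul, star_trivial, (IsSelfAdjoint.of_nonneg hc).star_eq, smul_mul_assoc,
      smul_mul_assoc, mul_smul_comm, smul_smul, ht]
    simp only [c, pow_three, smul_mul_assoc, mul_smul_comm, smul_smul, mul_assoc]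
  refine ⟨t • c, ?_, ?_⟩ <;> rw [hcube]
  · exact one_sub_pow_nonneg hc hc1.le 3
  · exact not_isUnit_one_sub_pow (not_isUnit_one_sub_of_norm_eq_one hc hc1) 3

end CStarAlgebra

theorem stmt9_general {A G : Type*} [CStarAlgebra A] [PartialOrder A] [StarOrderedRing A] [Group G]
    (σ : G → A ≃⋆ₐ[ℂ] A)
    (n : ℕ)
    (hmaj : ∀ a : A, 0 ≤ a → a ≠ 0 → ∀ b : A, 0 ≤ b → ¬ IsUnit b →
      ∀ ε : ℝ, 0 < ε →
        ∃ (d : Fin n → A) (g : Fin n → G),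
          ‖(∑ j, star (d j) * σ (g j) a * d j) - b‖ < ε) :
    ∀ a : A, 0 ≤ a → a ≠ 0 → ∀ ε : ℝ, 0 < ε →
      ∃ (d : Fin (n + 1) → A) (g : Fin (n + 1) → G),
        ‖(∑ j, star (d j) * σ (g j) a * d j) - 1‖ < ε := by
  intro a ha ha0 ε hε
  obtain ⟨d₀, hb, hbu⟩ := CStarAlgebra.exists_one_sub_star_mul_mul_nonneg_not_isUnit
    (map_nonneg (σ 1) ha) ((map_ne_zero_iff _ (σ 1).injective).mpr ha0)
  obtain ⟨d, g, hd⟩ := hmaj a ha ha0 _ hb hbu ε hε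
  refine ⟨Fin.snoc d d₀, Fin.snoc g 1, ?_⟩
  rw [Fin.sum_univ_castSucc]
  simpa only [Fin.snoc_castSucc, Fin.snoc_last, sub_sub_eq_add_sub] using hd

/-- On a unital C*-algebra, every `n`-majorizing action (`n ≥ 1`) is
`(n+1)`-covering. -/
theorem stmt9 {A G : Type*} [CStarAlgebra A] [PartialOrder A] [StarOrderedRing A] [Group G]
    (σ : G → A ≃⋆ₐ[ℂ] A) (hσ : ∀ g h x, σ (g * h) x = σ g (σ h x))
    (n : ℕ) (hn : 1 ≤ n)
    (hmaj : ∀ a : A, 0 ≤ a → a ≠ 0 → ∀ b : A, 0 ≤ b → ¬ IsUnit b →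
      ∀ ε : ℝ, 0 < ε →
        ∃ (d : Fin n → A) (g : Fin n → G),
          ‖(∑ j, star (d j) * σ (g j) a * d j) - b‖ < ε) :
    ∀ a : A, 0 ≤ a → a ≠ 0 → ∀ ε : ℝ, 0 < ε →
      ∃ (d : Fin (n + 1) → A) (g : Fin (n + 1) → G),
        ‖(∑ j, star (d j) * σ (g j) a * d j) - 1‖ < ε :=
  stmt9_general σ n hmaj
end

section
/- Let B be a C*-algebra. The following are equivalent: (i) B contains no non-zero projection p with pBp = ℂ·p; (iii) for every pair of non-zero a₁, a₂ ∈ B₊ and every c ∈ B there exist non-zero b₁, b₂ ∈ B₊ with b₁ c b₂ = 0, b₁ ≤ a₁ and b₂ ≤ a₂. -/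
/-!
For `(i) → (iii)` put `d = a₁ c a₂` and `k = d⋆ d`. It suffices to find positive `e, f` with
`e k ≠ 0`, `f k ≠ 0` and `f k e = 0`: then multiples of `a₁ (d f d⋆) a₁` and `a₂ e a₂` are the
required `b₁ ≤ a₁`, `b₂ ≤ a₂`, since `b₁ c b₂ ∝ a₁ d (f k e) a₂`. If the spectrum of `k` has two
distinct non-zero points, `e` and `f` are continuous functions of `k` with disjoint supports.
Otherwise `k` is a multiple of a projection `p`. As `p` is not minimal and positive elements span
the algebra, some positive `m ≤ p` is not a multiple of `p`, and the same dichotomy applied to `m`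
gives non-zero positive `e, f` in `pBp` with `f e = 0`.

Conversely, if `p` is a minimal projection then every `0 ≤ b ≤ p` equals `p b p ∈ ℂ p`, so
`b₁ p b₂` is a non-zero multiple of `p`.
-/

open CFC

namespace CStarAlgebra

variable {B : Type*} [NonUnitalCStarAlgebra B]

lemma isStarProjection_inv_smul_of_quasispectrum_subset {a : B} (ha : IsSelfAdjoint a) {β : ℝ}
    (hβ : β ≠ 0) (h : ∀ x ∈ quasispectrum ℝ a, x = 0 ∨ x = β) : IsStarProjection (β⁻¹ • a) := by
  have hsa : IsSelfAdjoint (β⁻¹ • a) := (IsSelfAdjoint.all β⁻¹).smul ha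
  refine ⟨(isIdempotentElem_iff_quasispectrum_subset ℝ _ hsa).mpr ?_, hsa⟩
  rw [← cfcₙ_const_mul_id β⁻¹ a, cfcₙ_map_quasispectrum _ a]
  rintro _ ⟨x, hx, rfl⟩
  rcases h x hx with rfl | rfl <;> simp [hβ]

variable [PartialOrder B] [StarOrderedRing B]

lemma mul_eq_zero_of_star_mul_mul_eq_zero {a x : B} (ha : 0 ≤ a) (h : star x * a * x = 0) :
    a * x = 0 := by
  have hsx : star (sqrt a * x) * (sqrt a * x) = 0 := by
    calc star (sqrt a * x) * (sqrt a * x) = star x * (sqrt a * sqrt a) * x := by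
          rw [star_mul, (sqrt_nonneg a).star_eq]; noncomm_ring
      _ = 0 := by rw [sqrt_mul_sqrt_self a, h]
  rw [← sqrt_mul_sqrt_self a, mul_assoc, (CStarRing.star_mul_self_eq_zero_iff _).mp hsx, mul_zero]

lemma eq_zero_of_le_of_mul_eq_zero {a e : B} (he : 0 ≤ e) (hea : e ≤ a) (h : e * a = 0) :
    e = 0 := by
  have hcube : star e * e * e = 0 := by
    refine le_antisymm ?_ (star_left_conjugate_nonneg he e)
    simpa [he.star_eq, h] using star_left_conjugate_le_conjugate hea e
  have hsq : star e * e = 0 := by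
    simpa [he.star_eq] using mul_eq_zero_of_star_mul_mul_eq_zero he hcube
  exact (CStarRing.star_mul_self_eq_zero_iff e).mp hsq

lemma exists_pos_smul_le_of_mul_mul_ne_zero {a E : B} (ha : 0 ≤ a) (hE : 0 ≤ E)
    (h : a * E * a ≠ 0) : ∃ r : ℝ, 0 < r ∧ r • (a * E * a) ≤ a := by
  set X := sqrt a * E * sqrt a
  have haEa : sqrt a * X * sqrt a = a * E * a := by
    calc sqrt a * X * sqrt a = (sqrt a * sqrt a) * E * (sqrt a * sqrt a) := by
          simp only [X]; noncomm_ring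
      _ = a * E * a := by rw [sqrt_mul_sqrt_self a]
  have hX : X ≠ 0 := by rintro hX; rw [hX, mul_zero, zero_mul] at haEa; exact h haEa.symm
  have hle : a * E * a ≤ ‖X‖ • a := by
    have := star_left_conjugate_le_norm_smul (a := sqrt a) (b := X)
      (by simpa [X] using (conjugate_nonneg_of_nonneg hE (sqrt_nonneg a)).isSelfAdjoint)
    rwa [(sqrt_nonneg a).star_eq, haEa, sqrt_mul_sqrt_self a] at this
  refine ⟨‖X‖⁻¹, by positivity, ?_⟩
  calc ‖X‖⁻¹ • (a * E * a) ≤ ‖X‖⁻¹ • (‖X‖ • a) := smul_le_smul_of_nonneg_left hle (by positivity)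
    _ = a := by rw [smul_smul, inv_mul_cancel₀ (norm_ne_zero_iff.mpr hX), one_smul]

lemma exists_orthogonal_le_of_mem_quasispectrum {a : B} (ha : 0 ≤ a) {μ ν : ℝ}
    (hμ : μ ∈ quasispectrum ℝ a) (hν : ν ∈ quasispectrum ℝ a) (hμ0 : 0 < μ) (hμν : μ < ν) :
    ∃ e f : B, 0 ≤ e ∧ 0 ≤ f ∧ e ≤ a ∧ f ≤ a ∧ e ≠ 0 ∧ f ≠ 0 ∧ f * e = 0 ∧ Commute a e := by
  -- a tent supported in `[0, t]` and a ramp supported in `[t, ∞)`, with `μ < t < ν`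
  obtain ⟨t, hμt, htν⟩ := exists_between hμν
  set φ : ℝ → ℝ := fun x => max (min x (t - x)) 0
  set ψ : ℝ → ℝ := fun x => max (x - t) 0
  have hφ0 : φ 0 = 0 := by simp [φ]
  have hψ0 : ψ 0 = 0 := by simp [ψ, (hμ0.trans hμt).le]
  have hψφ : (fun x => ψ x * φ x) = 0 := by
    ext x
    rcases le_total x t with hx | hx
    · simp [ψ, hx]
    · simp [φ, hx]
  have cfcₙ_le_self {g : ℝ → ℝ} (hg : Continuous g) (hg0 : g 0 = 0) (hgx : ∀ x, 0 ≤ x → g x ≤ x) :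
      cfcₙ g a ≤ a := by
    conv_rhs => rw [← cfcₙ_id' ℝ a]
    exact cfcₙ_mono fun x hx => hgx x (quasispectrum_nonneg_of_nonneg a ha x hx)
  have cfcₙ_ne_zero_of_mem {g : ℝ → ℝ} (hg : Continuous g) (hg0 : g 0 = 0) {x : ℝ}
      (hx : x ∈ quasispectrum ℝ a) (hgx : g x ≠ 0) : cfcₙ g a ≠ 0 := by
    rw [← cfcₙ_zero ℝ a]
    exact fun h => hgx ((eqOn_of_cfcₙ_eq_cfcₙ h) hx)
  refine ⟨cfcₙ φ a, cfcₙ ψ a, cfcₙ_nonneg fun x _ => le_max_right _ _,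
    cfcₙ_nonneg fun x _ => le_max_right _ _,
    cfcₙ_le_self (by fun_prop) hφ0 fun x hx => by simp [φ, hx],
    cfcₙ_le_self (by fun_prop) hψ0 fun x hx => by simp [ψ, hx]; linarith,
    cfcₙ_ne_zero_of_mem (by fun_prop) hφ0 hμ (lt_max_of_lt_left (lt_min hμ0 (sub_pos.mpr hμt))).ne',
    cfcₙ_ne_zero_of_mem (by fun_prop) hψ0 hν (lt_max_of_lt_left (sub_pos.mpr htν)).ne', ?_, ?_⟩
  · rw [← cfcₙ_mul ψ φ a, hψφ, cfcₙ_zero]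
  · simpa [cfcₙ_id' ℝ a] using cfcₙ_commute_cfcₙ (fun x => x) φ a

lemma exists_orthogonal_le_or_isStarProjection {a : B} (ha : 0 ≤ a) (ha0 : a ≠ 0) :
    (∃ e f : B, 0 ≤ e ∧ 0 ≤ f ∧ e ≤ a ∧ f ≤ a ∧ e ≠ 0 ∧ f ≠ 0 ∧ f * e = 0 ∧ Commute a e) ∨
      ∃ β : ℝ, β ≠ 0 ∧ IsStarProjection (β⁻¹ • a) := by
  by_cases h : ∃ μ ∈ quasispectrum ℝ a, ∃ ν ∈ quasispectrum ℝ a, 0 < μ ∧ μ < ν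
  · obtain ⟨μ, hμ, ν, hν, hμ0, hμν⟩ := h
    exact .inl (exists_orthogonal_le_of_mem_quasispectrum ha hμ hν hμ0 hμν)
  push Not at h
  obtain ⟨β, hβ, hβ0⟩ : ∃ β ∈ quasispectrum ℝ a, β ≠ 0 := by
    by_contra! h0
    exact ha0 (eq_zero_of_quasispectrum_eq_zero a h0)
  have hpos {x : ℝ} (hx : x ∈ quasispectrum ℝ a) (hx0 : x ≠ 0) : 0 < x :=
    (quasispectrum_nonneg_of_nonneg a ha x hx).lt_of_ne' hx0
  refine .inr ⟨β, hβ0, isStarProjection_inv_smul_of_quasispectrum_subset ha.isSelfAdjoint hβ0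
    fun x hx => or_iff_not_imp_left.mpr fun hx0 => ?_⟩
  exact le_antisymm (h β hβ x hx (hpos hβ hβ0)) (h x hx β hβ (hpos hx hx0))

lemma exists_nonneg_le_ne_smul_of_not_forall {p : B} (hp : IsStarProjection p)
    (h : ¬ ∀ x : B, ∃ c : ℂ, p * x * p = c • p) :
    ∃ m : B, 0 ≤ m ∧ m ≤ p ∧ ∀ c : ℂ, m ≠ c • p := by
  obtain ⟨u, hu, hup⟩ : ∃ u : B, 0 ≤ u ∧ ∀ c : ℂ, p * u * p ≠ c • p := by
    by_contra! hcon
    refine h fun x => ?_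
    have hx : x ∈ (ℂ ∙ p).comap (LinearMap.mulLeft ℂ p ∘ₗ LinearMap.mulRight ℂ p) := by
      have hle : Submodule.span ℂ {u : B | 0 ≤ u} ≤
          (ℂ ∙ p).comap (LinearMap.mulLeft ℂ p ∘ₗ LinearMap.mulRight ℂ p) :=
        Submodule.span_le.mpr fun u hu => by
          obtain ⟨c, hc⟩ := hcon u hu
          exact Submodule.mem_span_singleton.mpr ⟨c, by simp [← mul_assoc, hc]⟩
      exact hle (span_nonneg (A := B) ▸ Submodule.mem_top)
    obtain ⟨c, hc⟩ := Submodule.mem_span_singleton.mp hx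
    exact ⟨c, by simpa [mul_assoc] using hc.symm⟩
  have hu0 : ‖u‖ ≠ 0 := norm_ne_zero_iff.mpr fun hu0 => hup 0 (by simp [hu0])
  have hle : p * u * p ≤ ‖u‖ • p := by
    simpa [hp.isSelfAdjoint.star_eq, hp.isIdempotentElem.eq] using
      star_left_conjugate_le_norm_smul (a := p) (b := u) hu.isSelfAdjoint
  refine ⟨‖u‖⁻¹ • (p * u * p),
    smul_nonneg (by positivity) (conjugate_nonneg_of_nonneg hu hp.nonneg), ?_,
    fun c hc => hup (‖u‖ * c) ?_⟩
  · calc ‖u‖⁻¹ • (p * u * p) ≤ ‖u‖⁻¹ • (‖u‖ • p) := smul_le_smul_of_nonneg_left hle (by positivity)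
      _ = p := by rw [smul_smul, inv_mul_cancel₀ hu0, one_smul]
  · rw [mul_smul, ← hc, Complex.coe_smul, smul_smul, mul_inv_cancel₀ hu0, one_smul]

lemma exists_orthogonal_of_not_forall {p : B} (hp : IsStarProjection p)
    (h : ¬ ∀ x : B, ∃ c : ℂ, p * x * p = c • p) :
    ∃ e f : B, 0 ≤ e ∧ 0 ≤ f ∧ e ≠ 0 ∧ f ≠ 0 ∧ e * p = e ∧ f * p = f ∧ f * e = 0 := by
  obtain ⟨m, hm, hmp, hne⟩ := exists_nonneg_le_ne_smul_of_not_forall hp h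
  have hm0 : m ≠ 0 := fun hm0 => hne 0 (by simp [hm0])
  rcases exists_orthogonal_le_or_isStarProjection hm hm0 with
    ⟨e, f, he, hf, hem, hfm, he0, hf0, hfe, -⟩ | ⟨β, hβ, hq⟩
  · exact ⟨e, f, he, hf, he0, hf0, (hp.mul_right_and_mul_left_of_nonneg_of_le he (hem.trans hmp)).1,
      (hp.mul_right_and_mul_left_of_nonneg_of_le hf (hfm.trans hmp)).1, hfe⟩
  obtain ⟨hmp', hpm'⟩ := hp.mul_right_and_mul_left_of_nonneg_of_le hm hmp
  have hqp : β⁻¹ • m * p = β⁻¹ • m := by rw [smul_mul_assoc, hmp']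
  have hpq : p * β⁻¹ • m = β⁻¹ • m := by rw [mul_smul_comm, hpm']
  refine ⟨β⁻¹ • m, p - β⁻¹ • m, hq.nonneg, (hq.sub_of_mul_eq_left hp hqp).nonneg,
    smul_ne_zero (inv_ne_zero hβ) hm0, fun hpq' => hne β ?_, hqp, ?_, ?_⟩
  · rw [Complex.coe_smul, sub_eq_zero.mp hpq', smul_smul, mul_inv_cancel₀ hβ, one_smul]
  · rw [sub_mul, hp.isIdempotentElem.eq, hqp]
  · rw [sub_mul, hpq, hq.isIdempotentElem.eq, sub_self]

lemma exists_orthogonal_of_not_exists_minimal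
    (hmin : ¬ ∃ p : B, p ≠ 0 ∧ IsSelfAdjoint p ∧ IsIdempotentElem p ∧
      ∀ x : B, ∃ c : ℂ, p * x * p = c • p)
    {k : B} (hk : 0 ≤ k) (hk0 : k ≠ 0) :
    ∃ e f : B, 0 ≤ e ∧ 0 ≤ f ∧ e * k ≠ 0 ∧ f * k ≠ 0 ∧ f * k * e = 0 := by
  rcases exists_orthogonal_le_or_isStarProjection hk hk0 with
    ⟨e, f, he, hf, hek, hfk, he0, hf0, hfe, hke⟩ | ⟨β, hβ, hp⟩
  · refine ⟨e, f, he, hf, fun h => he0 (eq_zero_of_le_of_mul_eq_zero he hek h),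
      fun h => hf0 (eq_zero_of_le_of_mul_eq_zero hf hfk h), ?_⟩
    rw [mul_assoc, hke.eq, ← mul_assoc, hfe, zero_mul]
  set p := β⁻¹ • k with hpk
  have hkp : k = β • p := by rw [hpk, smul_smul, mul_inv_cancel₀ hβ, one_smul]
  obtain ⟨e, f, he, hf, he0, hf0, hep, hfp, hfe⟩ := exists_orthogonal_of_not_forall hp
    fun h => hmin ⟨p, smul_ne_zero (inv_ne_zero hβ) hk0, hp.isSelfAdjoint, hp.isIdempotentElem, h⟩
  refine ⟨e, f, he, hf, ?_, ?_, ?_⟩ <;> rw [hkp, mul_smul_comm]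
  · rw [hep]; exact smul_ne_zero hβ he0
  · rw [hfp]; exact smul_ne_zero hβ hf0
  · rw [smul_mul_assoc, hfp, hfe, smul_zero]

lemma exists_le_mul_mul_eq_zero_of_not_exists_minimal
    (hmin : ¬ ∃ p : B, p ≠ 0 ∧ IsSelfAdjoint p ∧ IsIdempotentElem p ∧
      ∀ x : B, ∃ c : ℂ, p * x * p = c • p)
    {a₁ a₂ : B} (h₁ : 0 ≤ a₁) (h₁0 : a₁ ≠ 0) (h₂ : 0 ≤ a₂) (h₂0 : a₂ ≠ 0) (c : B) :
    ∃ b₁ b₂ : B, 0 ≤ b₁ ∧ b₁ ≠ 0 ∧ 0 ≤ b₂ ∧ b₂ ≠ 0 ∧ b₁ * c * b₂ = 0 ∧ b₁ ≤ a₁ ∧ b₂ ≤ a₂ := by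
  set d := a₁ * c * a₂
  by_cases hd : d = 0
  · exact ⟨a₁, a₂, h₁, h₁0, h₂, h₂0, hd, le_rfl, le_rfl⟩
  obtain ⟨e, f, he, hf, hek, hfk, hfke⟩ := exists_orthogonal_of_not_exists_minimal hmin
    (star_mul_self_nonneg d) ((CStarRing.star_mul_self_eq_zero_iff d).not.mpr hd)
  set E := d * f * star d
  have hE : 0 ≤ E := by simpa using star_left_conjugate_nonneg hf (star d)
  have h₁E : a₁ * E * a₁ ≠ 0 := by
    intro h
    have hEa : E * a₁ = 0 := mul_eq_zero_of_star_mul_mul_eq_zero hE (by rwa [h₁.star_eq])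
    refine hfk (mul_eq_zero_of_star_mul_mul_eq_zero hf ?_)
    calc star (star d * d) * f * (star d * d) = star d * (E * a₁) * (c * a₂) := by
          simp only [E, d, star_mul, star_star]; noncomm_ring
      _ = 0 := by rw [hEa, mul_zero, zero_mul]
  have h₂e : a₂ * e * a₂ ≠ 0 := by
    intro h
    have hea : e * a₂ = 0 := mul_eq_zero_of_star_mul_mul_eq_zero he (by rwa [h₂.star_eq])
    refine hek ?_
    calc e * (star d * d) = e * a₂ * (star c * a₁ * d) := by
          simp only [d, star_mul, h₁.star_eq, h₂.star_eq]; noncomm_ring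
      _ = 0 := by rw [hea, zero_mul]
  obtain ⟨r₁, hr₁, hle₁⟩ := exists_pos_smul_le_of_mul_mul_ne_zero h₁ hE h₁E
  obtain ⟨r₂, hr₂, hle₂⟩ := exists_pos_smul_le_of_mul_mul_ne_zero h₂ he h₂e
  refine ⟨r₁ • (a₁ * E * a₁), r₂ • (a₂ * e * a₂),
    smul_nonneg hr₁.le (conjugate_nonneg_of_nonneg hE h₁), smul_ne_zero hr₁.ne' h₁E,
    smul_nonneg hr₂.le (conjugate_nonneg_of_nonneg he h₂), smul_ne_zero hr₂.ne' h₂e, ?_, hle₁, hle₂⟩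
  calc r₁ • (a₁ * E * a₁) * c * r₂ • (a₂ * e * a₂)
      = (r₁ * r₂) • (a₁ * d * (f * (star d * d) * e) * a₂) := by
        rw [smul_mul_assoc, smul_mul_assoc, mul_smul_comm, smul_smul]
        congr 1
        simp only [E, d]; noncomm_ring
    _ = 0 := by rw [hfke, mul_zero, zero_mul, smul_zero]

lemma exists_eq_smul_of_nonneg_of_le {p b : B} (hp : IsStarProjection p)
    (hmin : ∀ x : B, ∃ c : ℂ, p * x * p = c • p) (hb : 0 ≤ b) (hbp : b ≤ p) :
    ∃ c : ℂ, b = c • p := by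
  obtain ⟨c, hc⟩ := hmin b
  exact ⟨c, (hp.conjugate_of_nonneg_of_le hb hbp).symm.trans hc⟩

end CStarAlgebra

/-- A C*-algebra `B` contains no non-zero projection `p` with `pBp = ℂ·p`
iff for every pair of non-zero positive `a₁, a₂` and every `c ∈ B` there are non-zero positive
`b₁ ≤ a₁`, `b₂ ≤ a₂` with `b₁ c b₂ = 0`. -/
theorem stmt12 {B : Type*} [NonUnitalCStarAlgebra B] [PartialOrder B] [StarOrderedRing B] :
    (¬ ∃ p : B, p ≠ 0 ∧ IsSelfAdjoint p ∧ IsIdempotentElem p ∧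
        ∀ x : B, ∃ c : ℂ, p * x * p = c • p) ↔
    (∀ a₁ a₂ : B, 0 ≤ a₁ → a₁ ≠ 0 → 0 ≤ a₂ → a₂ ≠ 0 → ∀ c : B,
        ∃ b₁ b₂ : B, 0 ≤ b₁ ∧ b₁ ≠ 0 ∧ 0 ≤ b₂ ∧ b₂ ≠ 0 ∧
          b₁ * c * b₂ = 0 ∧ b₁ ≤ a₁ ∧ b₂ ≤ a₂) := by
  refine ⟨fun hmin _ _ h₁ h₁0 h₂ h₂0 c =>
    CStarAlgebra.exists_le_mul_mul_eq_zero_of_not_exists_minimal hmin h₁ h₁0 h₂ h₂0 c, ?_⟩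
  rintro h ⟨p, hp0, hpsa, hpi, hmin⟩
  have hp : IsStarProjection p := ⟨hpi, hpsa⟩
  obtain ⟨b₁, b₂, hb₁, hb₁0, hb₂, hb₂0, hb, hb₁p, hb₂p⟩ := h p p hp.nonneg hp0 hp.nonneg hp0 p
  obtain ⟨c₁, rfl⟩ := CStarAlgebra.exists_eq_smul_of_nonneg_of_le hp hmin hb₁ hb₁p
  obtain ⟨c₂, rfl⟩ := CStarAlgebra.exists_eq_smul_of_nonneg_of_le hp hmin hb₂ hb₂p
  simp_all [smul_mul_assoc, mul_smul_comm, hpi.eq]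
end

section
/- Let α be an action of a discrete group G on a non-compact locally compact Hausdorff space X such that for every compact K ⊆ X and every non-empty open U ⊆ X there exists g ∈ G with α_g(K) ⊆ U. Then X is perfect (has no isolated points) and the action is topologically G-separating: for all open U₁, U₂ ⊆ X and compact K₁ ⊆ U₁, K₂ ⊆ U₂ there exist g₁, g₂ ∈ G with α_{g₁}(K₁) ⊆ U₁, α_{g₂}(K₂) ⊆ U₂ and α_{g₁}(K₁) ∩ α_{g₂}(K₂) = ∅. -/
/-!
A two-point set is compact, so it can be moved into any open singleton, contradicting injectivity;
as `X` is not compact it has two points, hence no isolated points. Being Hausdorff, every non-empty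
open set then contains two disjoint non-empty open subsets. To separate `K₁ ⊆ U₁` and `K₂ ⊆ U₂`,
move them into two such disjoint pieces of `U₁ ∩ U₂` if it is non-empty, and into `U₁` and `U₂`
themselves otherwise.
-/

open Set

section

variable {X G : Type*} [TopologicalSpace X]

def MovesCompactsIntoOpens (α : G → X ≃ₜ X) : Prop :=
  ∀ K : Set X, IsCompact K → ∀ U : Set X, IsOpen U → U.Nonempty → ∃ g : G, ⇑(α g) '' K ⊆ U

variable {α : G → X ≃ₜ X}

theorem MovesCompactsIntoOpens.exists_image_subset [Nonempty G] (h : MovesCompactsIntoOpens α)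
    {K U : Set X} (hK : IsCompact K) (hU : IsOpen U) (hKU : K.Nonempty → U.Nonempty) :
    ∃ g : G, ⇑(α g) '' K ⊆ U := by
  rcases K.eq_empty_or_nonempty with rfl | hKne
  · exact ⟨Classical.arbitrary G, by simp⟩
  · exact h K hK U hU (hKU hKne)

theorem MovesCompactsIntoOpens.not_isOpen_singleton [Nontrivial X]
    (h : MovesCompactsIntoOpens α) (x : X) : ¬ IsOpen ({x} : Set X) := fun hx => by
  obtain ⟨a, b, hab⟩ := exists_pair_ne X
  obtain ⟨g, hg⟩ := h {a, b} (toFinite _).isCompact {x} hx (singleton_nonempty x)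
  have ha : α g a = x := hg (mem_image_of_mem _ (mem_insert a {b}))
  have hb : α g b = x := hg (mem_image_of_mem _ (mem_insert_of_mem a rfl))
  exact hab ((α g).injective (ha.trans hb.symm))

end

theorem IsOpen.exists_disjoint_nonempty_open_subsets {X : Type*} [TopologicalSpace X] [T2Space X]
    (hX : ∀ x : X, ¬ IsOpen ({x} : Set X)) {V : Set X} (hV : IsOpen V) (hne : V.Nonempty) :
    ∃ V₁ V₂ : Set X, IsOpen V₁ ∧ IsOpen V₂ ∧ V₁ ⊆ V ∧ V₂ ⊆ V ∧ V₁.Nonempty ∧ V₂.Nonempty ∧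
      Disjoint V₁ V₂ := by
  obtain ⟨a, ha⟩ := hne
  obtain ⟨b, hb, hba⟩ : ∃ b ∈ V, b ≠ a := by
    by_contra! hV_sub
    exact hX a (eq_singleton_iff_unique_mem.mpr ⟨ha, hV_sub⟩ ▸ hV)
  obtain ⟨W₁, W₂, hW₁, hW₂, haW, hbW, hW⟩ := t2_separation hba.symm
  exact ⟨V ∩ W₁, V ∩ W₂, hV.inter hW₁, hV.inter hW₂, inter_subset_left, inter_subset_left,
    ⟨a, ha, haW⟩, ⟨b, hb, hbW⟩, hW.mono inter_subset_right inter_subset_right⟩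

theorem MovesCompactsIntoOpens.exists_disjoint_images {X G : Type*} [TopologicalSpace X]
    [T2Space X] [Nonempty G] [Nontrivial X] {α : G → X ≃ₜ X} (h : MovesCompactsIntoOpens α)
    {U₁ U₂ K₁ K₂ : Set X} (hU₁ : IsOpen U₁) (hU₂ : IsOpen U₂) (hK₁ : IsCompact K₁)
    (hK₂ : IsCompact K₂) (hKU₁ : K₁ ⊆ U₁) (hKU₂ : K₂ ⊆ U₂) :
    ∃ g₁ g₂ : G, ⇑(α g₁) '' K₁ ⊆ U₁ ∧ ⇑(α g₂) '' K₂ ⊆ U₂ ∧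
      Disjoint (⇑(α g₁) '' K₁) (⇑(α g₂) '' K₂) := by
  obtain ⟨V₁, V₂, hV₁, hV₂, hVU₁, hVU₂, hKV₁, hKV₂, hV⟩ :
      ∃ V₁ V₂ : Set X, IsOpen V₁ ∧ IsOpen V₂ ∧ V₁ ⊆ U₁ ∧ V₂ ⊆ U₂ ∧
        (K₁.Nonempty → V₁.Nonempty) ∧ (K₂.Nonempty → V₂.Nonempty) ∧ Disjoint V₁ V₂ := by
    rcases (U₁ ∩ U₂).eq_empty_or_nonempty with hU | hU
    · exact ⟨U₁, U₂, hU₁, hU₂, subset_rfl, subset_rfl, fun hK => hK.mono hKU₁,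
        fun hK => hK.mono hKU₂, disjoint_iff_inter_eq_empty.mpr hU⟩
    · obtain ⟨V₁, V₂, hV₁, hV₂, hVU₁, hVU₂, hne₁, hne₂, hV⟩ :=
        (hU₁.inter hU₂).exists_disjoint_nonempty_open_subsets h.not_isOpen_singleton hU
      exact ⟨V₁, V₂, hV₁, hV₂, hVU₁.trans inter_subset_left, hVU₂.trans inter_subset_right,
        fun _ => hne₁, fun _ => hne₂, hV⟩
  obtain ⟨g₁, hg₁⟩ := h.exists_image_subset hK₁ hV₁ hKV₁
  obtain ⟨g₂, hg₂⟩ := h.exists_image_subset hK₂ hV₂ hKV₂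
  exact ⟨g₁, g₂, hg₁.trans hVU₁, hg₂.trans hVU₂, hV.mono hg₁ hg₂⟩

theorem stmt16_general {X G : Type*} [TopologicalSpace X] [T2Space X]
    [Group G] (hnc : ¬ CompactSpace X)
    (α : G → X ≃ₜ X)
    (htop : ∀ K : Set X, IsCompact K → ∀ U : Set X, IsOpen U → U.Nonempty →
      ∃ g : G, ⇑(α g) '' K ⊆ U) :
    (∀ x : X, ¬ IsOpen ({x} : Set X)) ∧
    (∀ U₁ U₂ : Set X, IsOpen U₁ → IsOpen U₂ → ∀ K₁ K₂ : Set X, IsCompact K₁ → IsCompact K₂ →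
      K₁ ⊆ U₁ → K₂ ⊆ U₂ →
        ∃ g₁ g₂ : G, ⇑(α g₁) '' K₁ ⊆ U₁ ∧ ⇑(α g₂) '' K₂ ⊆ U₂ ∧
          (⇑(α g₁) '' K₁) ∩ (⇑(α g₂) '' K₂) = ∅) := by
  have hmove : MovesCompactsIntoOpens α := htop
  have : Infinite X := not_finite_iff_infinite.mp fun _ => hnc Finite.compactSpace
  refine ⟨hmove.not_isOpen_singleton, fun U₁ U₂ hU₁ hU₂ K₁ K₂ hK₁ hK₂ hKU₁ hKU₂ => ?_⟩
  obtain ⟨g₁, g₂, hg₁, hg₂, hdisj⟩ := hmove.exists_disjoint_images hU₁ hU₂ hK₁ hK₂ hKU₁ hKU₂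
  exact ⟨g₁, g₂, hg₁, hg₂, disjoint_iff_inter_eq_empty.mp hdisj⟩

/-- If `X` is a non-compact locally compact Hausdorff space and the action `α` of
`G` moves every compact set into every non-empty open set, then `X` is perfect and the action is
topologically `G`-separating. -/
theorem stmt16 {X G : Type*} [TopologicalSpace X] [LocallyCompactSpace X] [T2Space X]
    [Group G] (hnc : ¬ CompactSpace X)
    (α : G → X ≃ₜ X) (hα : ∀ g h x, α (g * h) x = α g (α h x))
    (htop : ∀ K : Set X, IsCompact K → ∀ U : Set X, IsOpen U → U.Nonempty →
      ∃ g : G, ⇑(α g) '' K ⊆ U) :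
    (∀ x : X, ¬ IsOpen ({x} : Set X)) ∧
    (∀ U₁ U₂ : Set X, IsOpen U₁ → IsOpen U₂ → ∀ K₁ K₂ : Set X, IsCompact K₁ → IsCompact K₂ →
      K₁ ⊆ U₁ → K₂ ⊆ U₂ →
        ∃ g₁ g₂ : G, ⇑(α g₁) '' K₁ ⊆ U₁ ∧ ⇑(α g₂) '' K₂ ⊆ U₂ ∧
          (⇑(α g₁) '' K₁) ∩ (⇑(α g₂) '' K₂) = ∅) :=
  stmt16_general hnc α htop
end

section
/- Let A = C(X) be a unital commutative C*-algebra with G a discrete group acting via a minimal action α on the compact Hausdorff space X, and suppose the induced action σ is n-covering (n ≥ 2). Then the action is n-filling: for all b₁,…,bₙ ∈ A₊ with ‖bⱼ‖ = 1 and every ε > 0 there exist g₁,…,gₙ ∈ G with Σⱼ σ_{gⱼ}(bⱼ) ≥ 1 − ε. Conversely, if the action is n-filling and A is not isomorphic to a subalgebra of Mₙ(ℂ), then it is n-covering. -/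
/-!
Covering implies filling: given `bⱼ` of norm one, the sets `Uⱼ = {‖bⱼ‖ > 1 - ε}` are nonempty and
open, so by minimality one point `x₀` has translates `α hⱼ x₀ ∈ Uⱼ`, and hence a whole neighbourhood
`V` of `x₀` satisfies `α hⱼ V ⊆ Uⱼ` for all `j`. Apply the covering property to a Urysohn function
`a` supported in `V`: `‖Σ dⱼ* σ_{gⱼ}(a) dⱼ - 1‖ < 1` forces every `x` into some `α gⱼ V`, so
`σ_{gⱼ hⱼ⁻¹}(bⱼ)(x) > 1 - ε`.

Filling implies covering: filling with all `bⱼ = a / ‖a‖` makes `D = Σ σ_{gⱼ}(a)` bounded below,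
and `dⱼ = D^{-1/2}` gives `Σ dⱼ* σ_{gⱼ}(a) dⱼ = 1` exactly.
-/

open scoped ComplexOrder

section

variable {X G : Type*} [TopologicalSpace X]

-- `σ_g(a) = a ∘ (α g)⁻¹` is the action of `G` on `C(X, ℂ)` induced by `α`.
def IsCovering [CompactSpace X] (α : G → X ≃ₜ X) (n : ℕ) : Prop :=
  ∀ a : C(X, ℂ), (∀ x, 0 ≤ a x) → a ≠ 0 → ∀ ε : ℝ, 0 < ε →
    ∃ (d : Fin n → C(X, ℂ)) (g : Fin n → G),
      ‖(∑ j, star (d j) * a.comp ((α (g j)).symm : C(X, X)) * d j) - 1‖ < ε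

def IsFilling [CompactSpace X] (α : G → X ≃ₜ X) (n : ℕ) : Prop :=
  ∀ b : Fin n → C(X, ℂ), (∀ j x, 0 ≤ b j x) → (∀ j, ‖b j‖ = 1) → ∀ ε : ℝ, 0 < ε →
    ∃ g : Fin n → G, ∀ x : X, 1 - (ε : ℂ) ≤ (∑ j, (b j).comp ((α (g j)).symm : C(X, X))) x

theorem action_one_apply [Group G] {α : G → X ≃ₜ X}
    (hα : ∀ g h x, α (g * h) x = α g (α h x)) (x : X) : α 1 x = x :=
  (α 1).injective (by rw [← hα, one_mul])

theorem action_symm_apply [Group G] {α : G → X ≃ₜ X} (hα : ∀ g h x, α (g * h) x = α g (α h x))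
    (g : G) (x : X) : (α g).symm x = α g⁻¹ x :=
  (α g).injective (by rw [Homeomorph.apply_symm_apply, ← hα, mul_inv_cancel, action_one_apply hα])

theorem action_symm_mul_inv_apply [Group G] {α : G → X ≃ₜ X}
    (hα : ∀ g h x, α (g * h) x = α g (α h x)) (g h : G) (x : X) :
    (α (g * h⁻¹)).symm x = α h ((α g).symm x) := by
  rw [action_symm_apply hα, mul_inv_rev, inv_inv, hα, ← action_symm_apply hα]

theorem exists_isOpen_mapsTo_of_dense_orbit {ι : Type*} [Finite ι] {α : G → X ≃ₜ X} {x₀ : X}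
    (hx₀ : Dense (Set.range fun g : G => α g x₀)) {U : ι → Set X} (hU : ∀ j, IsOpen (U j))
    (hU_ne : ∀ j, (U j).Nonempty) :
    ∃ h : ι → G, ∃ V : Set X, IsOpen V ∧ x₀ ∈ V ∧ ∀ j, Set.MapsTo (α (h j)) V (U j) := by
  have hmeet : ∀ j, ∃ h : G, α h x₀ ∈ U j := fun j => by
    obtain ⟨-, ⟨h, rfl⟩, hU'⟩ := hx₀.exists_mem_open (hU j) (hU_ne j)
    exact ⟨h, hU'⟩
  choose h hh using hmeet
  exact ⟨h, ⋂ j, α (h j) ⁻¹' U j,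
    isOpen_iInter_of_finite fun j => (hU j).preimage (α (h j)).continuous,
    Set.mem_iInter.2 hh, fun j _ hy => Set.mem_iInter.1 hy j⟩

theorem ContinuousMap.exists_nonneg_ne_zero_support_subset [NormalSpace X] [T1Space X]
    {V : Set X} (hV : IsOpen V) (hV_ne : V.Nonempty) :
    ∃ a : C(X, ℂ), (∀ x, 0 ≤ a x) ∧ a ≠ 0 ∧ Function.support a ⊆ V := by
  obtain ⟨x₀, hx₀⟩ := hV_ne
  obtain ⟨f, hf_zero, hf_one, hf_mem⟩ := exists_continuous_zero_one_of_isClosed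
    hV.isClosed_compl isClosed_singleton (Set.disjoint_singleton_right.2 (not_not.2 hx₀))
  refine ⟨⟨fun x => (f x : ℂ), by fun_prop⟩, fun x => Complex.zero_le_real.2 (hf_mem x).1,
    fun h => ?_, fun x hx => ?_⟩
  · simpa [hf_one rfl] using congrArg (· x₀) h
  · by_contra hxV
    exact hx (by simp [hf_zero hxV])

theorem ContinuousMap.apply_ne_zero_of_norm_sub_one_lt_one [CompactSpace X] {R : Type*}
    [NormedRing R] [NormOneClass R] {F : C(X, R)} (hF : ‖F - 1‖ < 1) (x : X) : F x ≠ 0 := by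
  intro hFx
  have : ‖(F - 1) x‖ ≤ ‖F - 1‖ := (F - 1).norm_coe_le_norm x
  simp [hFx] at this
  linarith

theorem ContinuousMap.exists_lt_norm_apply [CompactSpace X] [Nonempty X] {E : Type*}
    [NormedAddCommGroup E] (f : C(X, E)) {r : ℝ} (hr : r < ‖f‖) : ∃ x, r < ‖f x‖ :=
  exists_lt_of_lt_ciSup (f.norm_eq_iSup_norm ▸ hr)

theorem Complex.ofReal_le_sum_of_le_norm {ι : Type*} {s : Finset ι} {z : ι → ℂ}
    (hz : ∀ i ∈ s, 0 ≤ z i) {j : ι} (hj : j ∈ s) {r : ℝ} (hr : r ≤ ‖z j‖) :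
    (r : ℂ) ≤ ∑ i ∈ s, z i :=
  calc (r : ℂ) ≤ ‖z j‖ := Complex.real_le_real.2 hr
    _ = z j := Complex.norm_of_nonneg' (hz j hj)
    _ ≤ ∑ i ∈ s, z i := Finset.single_le_sum hz hj

theorem ContinuousMap.exists_star_mul_mul_eq_one {c : C(X, ℂ)} (hc : ∀ x, 0 < c x) :
    ∃ d : C(X, ℂ), star d * c * d = 1 := by
  have hre : ∀ x, 0 < (c x).re := fun x => (Complex.pos_iff.1 (hc x)).1
  have hsqrt : ∀ x, √(c x).re ≠ 0 := fun x => (Real.sqrt_pos.2 (hre x)).ne'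
  refine ⟨⟨fun x => ((√(c x).re)⁻¹ : ℝ), Complex.continuous_ofReal.comp
    ((Real.continuous_sqrt.comp (Complex.continuous_re.comp c.continuous)).inv₀ hsqrt)⟩, ?_⟩
  ext x
  simp only [ContinuousMap.mul_apply, ContinuousMap.star_apply, ContinuousMap.coe_mk,
    ContinuousMap.one_apply, Complex.star_def, Complex.conj_ofReal]
  set s := √(c x).re
  have hcx : c x = ((s ^ 2 : ℝ) : ℂ) := by
    rw [Real.sq_sqrt (hre x).le]
    exact Complex.ext rfl (Complex.pos_iff.1 (hc x)).2.symm
  rw [hcx, ← Complex.ofReal_mul, ← Complex.ofReal_mul, inv_mul_eq_div, sq, mul_self_div_self,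
    mul_inv_cancel₀ (hsqrt x), Complex.ofReal_one]

theorem ContinuousMap.exists_apply_ne_zero_of_norm_sum_sub_one_lt_one [CompactSpace X]
    {ι : Type*} {s : Finset ι} {c d : ι → C(X, ℂ)}
    (h : ‖∑ j ∈ s, star (d j) * c j * d j - 1‖ < 1) (x : X) : ∃ j ∈ s, c j x ≠ 0 := by
  obtain ⟨j, hj, hjx⟩ := Finset.exists_ne_zero_of_sum_ne_zero
    (by simpa using apply_ne_zero_of_norm_sub_one_lt_one h x)
  exact ⟨j, hj, right_ne_zero_of_mul (left_ne_zero_of_mul hjx)⟩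

theorem IsCovering.isFilling [CompactSpace X] [T2Space X] [Group G] {α : G → X ≃ₜ X} {n : ℕ}
    (hα : ∀ g h x, α (g * h) x = α g (α h x))
    (hmin : ∀ x : X, Dense (Set.range fun g : G => α g x)) (hcov : IsCovering α n) :
    IsFilling α n := by
  intro b hb_nonneg hb_norm ε hε
  rcases isEmpty_or_nonempty X with _ | hX
  · exact ⟨1, isEmptyElim⟩
  obtain ⟨x₀⟩ := id hX
  let U j := {x | 1 - ε < ‖b j x‖}
  have hU_open : ∀ j, IsOpen (U j) := fun j => isOpen_lt continuous_const (b j).continuous.norm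
  have hU_ne : ∀ j, (U j).Nonempty := fun j =>
    (b j).exists_lt_norm_apply (by rw [hb_norm j]; linarith)
  obtain ⟨h, V, hV_open, hx₀V, hV⟩ := exists_isOpen_mapsTo_of_dense_orbit (hmin x₀) hU_open hU_ne
  obtain ⟨a, ha_nonneg, ha_ne, ha_supp⟩ :=
    ContinuousMap.exists_nonneg_ne_zero_support_subset hV_open ⟨x₀, hx₀V⟩
  obtain ⟨d, g, hdg⟩ := hcov a ha_nonneg ha_ne 1 one_pos
  refine ⟨fun j => g j * (h j)⁻¹, fun x => ?_⟩
  obtain ⟨j, -, hj⟩ := ContinuousMap.exists_apply_ne_zero_of_norm_sum_sub_one_lt_one hdg x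
  have hjU : (α (g j * (h j)⁻¹)).symm x ∈ U j := by
    rw [action_symm_mul_inv_apply hα]
    exact hV j (ha_supp hj)
  simpa using Complex.ofReal_le_sum_of_le_norm (s := Finset.univ)
    (fun i _ => hb_nonneg i ((α (g i * (h i)⁻¹)).symm x)) (Finset.mem_univ j) hjU.le

theorem IsFilling.isCovering [CompactSpace X] {α : G → X ≃ₜ X} {n : ℕ} (hfill : IsFilling α n) :
    IsCovering α n := by
  intro a ha_nonneg ha_ne ε hε
  have ha : 0 < ‖a‖ := norm_pos_iff.2 ha_ne
  obtain ⟨g, hg⟩ := hfill (fun _ => (‖a‖⁻¹ : ℂ) • a)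
    (fun _ x => mul_nonneg (by simp) (ha_nonneg x))
    (fun _ => norm_smul_inv_norm ha_ne) (1 / 2) one_half_pos
  set E := ∑ j, a.comp ((α (g j)).symm : C(X, X))
  have hE : ∀ x, 0 < E x := by
    intro x
    have hx : 0 < (‖a‖⁻¹ : ℂ) * E x := by
      have hgx := hg x
      simp only [ContinuousMap.smul_comp, ← Finset.smul_sum, ContinuousMap.smul_apply,
        smul_eq_mul] at hgx
      refine lt_of_lt_of_le ?_ hgx
      norm_num
    simpa [ha.ne'] using mul_pos (Complex.zero_lt_real.2 ha) hx
  obtain ⟨d, hd⟩ := ContinuousMap.exists_star_mul_mul_eq_one hE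
  refine ⟨fun _ => d, g, ?_⟩
  rw [← Finset.sum_mul, ← Finset.mul_sum, hd, sub_self, norm_zero]
  exact hε

end

theorem stmt17_general {X G : Type*} [TopologicalSpace X] [CompactSpace X] [T2Space X] [Group G]
    (α : G → X ≃ₜ X) (hα : ∀ g h x, α (g * h) x = α g (α h x))
    (hmin : ∀ x : X, Dense (Set.range fun g : G => α g x))
    (n : ℕ) :
    ((∀ a : C(X, ℂ), (∀ x, 0 ≤ a x) → a ≠ 0 → ∀ ε : ℝ, 0 < ε →
        ∃ (d : Fin n → C(X, ℂ)) (g : Fin n → G),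
          ‖(∑ j, star (d j) * a.comp ((α (g j)).symm : C(X, X)) * d j) - 1‖ < ε) →
      (∀ b : Fin n → C(X, ℂ), (∀ j x, 0 ≤ b j x) → (∀ j, ‖b j‖ = 1) → ∀ ε : ℝ, 0 < ε →
        ∃ g : Fin n → G, ∀ x : X,
          1 - (ε : ℂ) ≤ (∑ j, (b j).comp ((α (g j)).symm : C(X, X))) x)) ∧
    ((∀ b : Fin n → C(X, ℂ), (∀ j x, 0 ≤ b j x) → (∀ j, ‖b j‖ = 1) → ∀ ε : ℝ, 0 < ε →
        ∃ g : Fin n → G, ∀ x : X,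
          1 - (ε : ℂ) ≤ (∑ j, (b j).comp ((α (g j)).symm : C(X, X))) x) →
      ¬ (∃ φ : C(X, ℂ) →⋆ₙₐ[ℂ] Matrix (Fin n) (Fin n) ℂ, Function.Injective φ) →
      (∀ a : C(X, ℂ), (∀ x, 0 ≤ a x) → a ≠ 0 → ∀ ε : ℝ, 0 < ε →
        ∃ (d : Fin n → C(X, ℂ)) (g : Fin n → G),
          ‖(∑ j, star (d j) * a.comp ((α (g j)).symm : C(X, X)) * d j) - 1‖ < ε)) :=
  ⟨fun hcov => IsCovering.isFilling hα hmin hcov, fun hfill _ => IsFilling.isCovering hfill⟩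

/-- For a minimal action of a discrete group `G` on a compact Hausdorff space `X`
(with induced action on `A = C(X)`) and `n ≥ 2`: if the induced action is `n`-covering then it
is `n`-filling; and conversely, if it is `n`-filling and `A` does not embed into `Mₙ(ℂ)`, then
it is `n`-covering. -/
theorem stmt17 {X G : Type*} [TopologicalSpace X] [CompactSpace X] [T2Space X] [Group G]
    (α : G → X ≃ₜ X) (hα : ∀ g h x, α (g * h) x = α g (α h x))
    (hmin : ∀ x : X, Dense (Set.range fun g : G => α g x))
    (n : ℕ) (hn : 2 ≤ n) :
    ((∀ a : C(X, ℂ), (∀ x, 0 ≤ a x) → a ≠ 0 → ∀ ε : ℝ, 0 < ε →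
        ∃ (d : Fin n → C(X, ℂ)) (g : Fin n → G),
          ‖(∑ j, star (d j) * a.comp ((α (g j)).symm : C(X, X)) * d j) - 1‖ < ε) →
      (∀ b : Fin n → C(X, ℂ), (∀ j x, 0 ≤ b j x) → (∀ j, ‖b j‖ = 1) → ∀ ε : ℝ, 0 < ε →
        ∃ g : Fin n → G, ∀ x : X,
          1 - (ε : ℂ) ≤ (∑ j, (b j).comp ((α (g j)).symm : C(X, X))) x)) ∧
    ((∀ b : Fin n → C(X, ℂ), (∀ j x, 0 ≤ b j x) → (∀ j, ‖b j‖ = 1) → ∀ ε : ℝ, 0 < ε →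
        ∃ g : Fin n → G, ∀ x : X,
          1 - (ε : ℂ) ≤ (∑ j, (b j).comp ((α (g j)).symm : C(X, X))) x) →
      ¬ (∃ φ : C(X, ℂ) →⋆ₙₐ[ℂ] Matrix (Fin n) (Fin n) ℂ, Function.Injective φ) →
      (∀ a : C(X, ℂ), (∀ x, 0 ≤ a x) → a ≠ 0 → ∀ ε : ℝ, 0 < ε →
        ∃ (d : Fin n → C(X, ℂ)) (g : Fin n → G),
          ‖(∑ j, star (d j) * a.comp ((α (g j)).symm : C(X, X)) * d j) - 1‖ < ε)) :=
  stmt17_general α hα hmin n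
end
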